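/- arXiv:2310.02891 — 4 statements merged into one kernel-verified Lean document; each statement's English description precedes it below -/
import Mathlib

section
/- Let α ∈ (0,2). For every C₀ > 0, κ ≥ 0, r > 0 and N > 0 there exist constants C > 0 and t₀ > 0 (depending on C₀, κ, α, r, N and the volume comparability constants) such that for all t ≥ t₀ and all x, y ∈ M: V(x, t^{1/α} + d(x,y)) · (t^{1/α} + d(x,y))^{α+2κ} · ∫₀^r V(y,√u)^{−1} exp(−C₀ d(x,y)²/u) η_t(u) u^{−κ} du ≤ C t^{−N}. -/
/-!
Once `t^{2/α} ≥ r`, every `u ∈ (0, r]` lies in the small-`u` regime, where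
`η_t(u) ≲ t^{1/(2-α)} u^{-q} exp(-c t^{2/(2-α)} u^{-α/(2-α)})`. Half of the exponential swallows
every negative power of `u` uniformly on `(0, r]`; the other half is at most
`exp(-(c/2) r^{-α/(2-α)} t^{2/(2-α)})`, which beats every power of `t`. On the spatial side,
doubling and comparability give `V(x, R) / V(y, √u) ≲ (R / √u)^ν` for `R = t^{1/α} + d(x, y)`,
and `R^p ≤ t^{p/α} (1 + d)^p` with `(1 + d)^p e^{-A d² / r} ≤ e^{p² r / (4A)}`, so the spatial
factors only cost a power of `t`.
-/

open MeasureTheory Metric Real Set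

lemma rpow_mul_exp_neg_mul_le {q b s : ℝ} (hq : 0 < q) (hb : 0 < b) (hs : 0 ≤ s) :
    s ^ q * exp (-(b * s)) ≤ (q / (b * exp 1)) ^ q := by
  have hbase : s * exp (-(b * s / q)) ≤ q / (b * exp 1) :=
    calc s * exp (-(b * s / q)) = q / b * (b * s / q * exp (-(b * s / q))) := by field_simp
      _ ≤ q / b * exp (-1) := by gcongr; exact mul_exp_neg_le_exp_neg_one _
      _ = q / (b * exp 1) := by rw [exp_neg, div_mul_eq_div_div, div_eq_mul_inv (q / b)]
  calc s ^ q * exp (-(b * s)) = (s * exp (-(b * s / q))) ^ q := by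
        rw [mul_rpow hs (exp_pos _).le, ← exp_mul]
        congr 2
        field_simp
    _ ≤ (q / (b * exp 1)) ^ q := by gcongr

lemma exists_rpow_mul_exp_neg_rpow_le (a N : ℝ) {b γ : ℝ} (hb : 0 < b) (hγ : 0 < γ) :
    ∃ K > 0, ∀ t ≥ 1, t ^ a * exp (-(b * t ^ γ)) ≤ K * t ^ (-N) := by
  set q := max ((a + N) / γ) 1
  have hq : 0 < q := lt_max_of_lt_right one_pos
  refine ⟨(q / (b * exp 1)) ^ q, by positivity, fun t ht => ?_⟩
  have ht0 : 0 < t := one_pos.trans_le ht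
  have hexp : t ^ (a + N) ≤ (t ^ γ) ^ q := by
    rw [← rpow_mul ht0.le]
    exact rpow_le_rpow_of_exponent_le ht ((div_le_iff₀' hγ).1 (le_max_left _ _))
  calc t ^ a * exp (-(b * t ^ γ)) = t ^ (a + N) * exp (-(b * t ^ γ)) * t ^ (-N) := by
        rw [mul_right_comm, ← rpow_add ht0, add_neg_cancel_right]
    _ ≤ (t ^ γ) ^ q * exp (-(b * t ^ γ)) * t ^ (-N) := by gcongr
    _ ≤ (q / (b * exp 1)) ^ q * t ^ (-N) := by
        gcongr
        exact rpow_mul_exp_neg_mul_le hq hb (by positivity)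

lemma exists_rpow_neg_mul_exp_le {m β c r : ℝ} (hm : 0 < m) (hβ : 0 < β) (hc : 0 < c) :
    ∃ K > 0, ∀ τ ≥ 1, ∀ u ∈ Ioc 0 r,
      u ^ (-m) * exp (-c * τ * u ^ (-β)) ≤ K * exp (-(c / 2 * r ^ (-β) * τ)) := by
  refine ⟨(m / β / (c / 2 * exp 1)) ^ (m / β), by positivity, fun τ hτ u ⟨hu, hur⟩ => ?_⟩
  have hru : r ^ (-β) ≤ u ^ (-β) := rpow_le_rpow_of_nonpos hu hur (by linarith)
  have hsplit : exp (-c * τ * u ^ (-β)) ≤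
      exp (-(c / 2 * r ^ (-β) * τ)) * exp (-(c / 2 * u ^ (-β))) := by
    rw [← exp_add]
    gcongr
    have hτ0 : 0 ≤ τ - 1 := by linarith
    nlinarith [mul_nonneg (mul_nonneg hc.le hτ0) (rpow_nonneg hu.le (-β)),
      mul_nonneg (mul_nonneg hc.le (by linarith : (0:ℝ) ≤ τ)) (sub_nonneg.2 hru)]
  have hpow : u ^ (-m) = (u ^ (-β)) ^ (m / β) := by
    rw [← rpow_mul hu.le]
    congr 1
    field_simp
  calc u ^ (-m) * exp (-c * τ * u ^ (-β))
      ≤ u ^ (-m) * (exp (-(c / 2 * r ^ (-β) * τ)) * exp (-(c / 2 * u ^ (-β)))) := by gcongr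
    _ = (u ^ (-β)) ^ (m / β) * exp (-(c / 2 * u ^ (-β))) * exp (-(c / 2 * r ^ (-β) * τ)) := by
        rw [hpow]; ring
    _ ≤ (m / β / (c / 2 * exp 1)) ^ (m / β) * exp (-(c / 2 * r ^ (-β) * τ)) := by
        gcongr
        exact rpow_mul_exp_neg_mul_le (by positivity) (by positivity) (by positivity)

lemma one_add_rpow_mul_exp_neg_mul_sq_le {p a d : ℝ} (hp : 0 ≤ p) (ha : 0 < a) (hd : 0 ≤ d) :
    (1 + d) ^ p * exp (-(a * d ^ 2)) ≤ exp (p ^ 2 / (4 * a)) := by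
  have h1 : (1 + d) ^ p ≤ exp (p * d) := by
    rw [mul_comm, exp_mul]
    gcongr
    linarith [add_one_le_exp d]
  calc (1 + d) ^ p * exp (-(a * d ^ 2)) ≤ exp (p * d) * exp (-(a * d ^ 2)) := by gcongr
    _ ≤ exp (p ^ 2 / (4 * a)) := by
        rw [← exp_add]
        gcongr
        rw [le_div_iff₀ (by positivity)]
        nlinarith [sq_nonneg (2 * a * d - p)]

lemma setIntegral_Ioc_le_of_norm_le {f : ℝ → ℝ} {a b D : ℝ} (hab : a ≤ b)
    (h : ∀ u ∈ Ioc a b, ‖f u‖ ≤ D) : ∫ u in Ioc a b, f u ≤ D * (b - a) := by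
  have := norm_setIntegral_le_of_norm_le_const (measure_Ioc_lt_top (μ := volume)) h
  rw [volume_real_Ioc_of_le hab] at this
  exact (le_abs_self _).trans this

-- `η_t(u)` is comparable to this profile for `u ≤ t^{2/α}`.
noncomputable def stableProfile (α t u : ℝ) : ℝ :=
  t ^ (1/(2-α)) * u ^ (-((4-α)/(4-2*α))) *
    Real.exp (-(((2-α)/2) * (α/2) ^ (α/(2-α))) * t ^ (2/(2-α)) * u ^ (-(α/(2-α))))

lemma stableProfile_pos (α : ℝ) {t u : ℝ} (ht : 0 < t) (hu : 0 < u) : 0 < stableProfile α t u := by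
  unfold stableProfile; positivity

lemma exists_rpow_mul_stableProfile_le {α : ℝ} (hα0 : 0 < α) (hα2 : α < 2) (a N : ℝ) {m r : ℝ}
    (hm : 0 ≤ m) (hr : 0 < r) :
    ∃ K > 0, ∀ t ≥ 1, ∀ u ∈ Ioc 0 r, t ^ a * u ^ (-m) * stableProfile α t u ≤ K * t ^ (-N) := by
  have h2α : 0 < 2 - α := by linarith
  have h42α : 0 < 4 - 2 * α := by linarith
  have hc : 0 < (2 - α) / 2 * (α / 2) ^ (α / (2 - α)) := by positivity
  obtain ⟨Ku, hKu, hu_bound⟩ := exists_rpow_neg_mul_exp_le (m := m + (4 - α) / (4 - 2 * α))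
    (β := α / (2 - α)) (add_pos_of_nonneg_of_pos hm (div_pos (by linarith) h42α)) (by positivity) hc
  obtain ⟨Kt, hKt, ht_bound⟩ := exists_rpow_mul_exp_neg_rpow_le (a + 1 / (2 - α)) N
    (b := (2 - α) / 2 * (α / 2) ^ (α / (2 - α)) / 2 * r ^ (-(α / (2 - α))))
    (γ := 2 / (2 - α)) (mul_pos (half_pos hc) (rpow_pos_of_pos hr _)) (by positivity)
  refine ⟨Ku * Kt, by positivity, fun t ht u hu => ?_⟩
  have ht0 : 0 < t := one_pos.trans_le ht
  have hτ : 1 ≤ t ^ (2 / (2 - α)) := one_le_rpow ht (by positivity)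
  calc t ^ a * u ^ (-m) * stableProfile α t u
      = t ^ (a + 1 / (2 - α)) * (u ^ (-(m + (4 - α) / (4 - 2 * α))) *
          exp (-((2 - α) / 2 * (α / 2) ^ (α / (2 - α))) * t ^ (2 / (2 - α)) *
            u ^ (-(α / (2 - α))))) := by
        rw [stableProfile, rpow_add ht0, neg_add, rpow_add hu.1]
        ring
    _ ≤ t ^ (a + 1 / (2 - α)) * (Ku * exp (-((2 - α) / 2 * (α / 2) ^ (α / (2 - α)) / 2 *
          r ^ (-(α / (2 - α))) * t ^ (2 / (2 - α))))) :=
        mul_le_mul_of_nonneg_left (hu_bound _ hτ u hu) (by positivity)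
    _ ≤ Ku * (Kt * t ^ (-N)) := by
        rw [mul_left_comm]
        exact mul_le_mul_of_nonneg_left (ht_bound t ht) hKu.le
    _ = Ku * Kt * t ^ (-N) := by ring

section Doubling

variable {X : Type*} [PseudoMetricSpace X] {V : X → ℝ → ℝ} {C₀ ν : ℝ}

lemma div_le_of_doubling (hV : ∀ x r, 0 ≤ V x r) (hC₀ : 0 ≤ C₀) (hν : 0 ≤ ν)
    (hdoub : ∀ x r R, 0 < r → r ≤ R → V x R / V x r ≤ C₀ * (R / r) ^ ν)
    (hcomp : ∀ x y r, 0 < r → V x r ≤ C₀ * (1 + dist x y / r) ^ ν * V y r)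
    {x y : X} {s R : ℝ} (hs : 0 < s) (hsR : s ≤ R) (hxy : dist x y ≤ R) :
    V x R / V y s ≤ C₀ ^ 2 * 2 ^ ν * (R / s) ^ ν := by
  have hR : 0 < R := hs.trans_le hsR
  have h2 : (1 + dist x y / R) ^ ν ≤ 2 ^ ν := by
    gcongr
    linarith [(div_le_one hR).2 hxy]
  calc V x R / V y s ≤ C₀ * 2 ^ ν * V y R / V y s := by
        gcongr
        · exact hV y s
        · exact (hcomp x y R hR).trans (by gcongr; exact hV y R)
    _ = C₀ * 2 ^ ν * (V y R / V y s) := by ring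
    _ ≤ C₀ * 2 ^ ν * (C₀ * (R / s) ^ ν) := by gcongr; exact hdoub y s R hs hsR
    _ = C₀ ^ 2 * 2 ^ ν * (R / s) ^ ν := by ring

lemma mul_rpow_mul_inv_mul_exp_le_of_doubling (hV : ∀ x r, 0 ≤ V x r) (hC₀ : 0 ≤ C₀) (hν : 0 ≤ ν)
    (hdoub : ∀ x r R, 0 < r → r ≤ R → V x R / V x r ≤ C₀ * (R / r) ^ ν)
    (hcomp : ∀ x y r, 0 < r → V x r ≤ C₀ * (1 + dist x y / r) ^ ν * V y r)
    {x y : X} {ρ u r A σ : ℝ} (hρ : 1 ≤ ρ) (hu : 0 < u) (hur : u ≤ r) (huρ : √u ≤ ρ)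
    (hA : 0 < A) (hσ : 0 ≤ σ) :
    V x (ρ + dist x y) * (ρ + dist x y) ^ σ * ((V y √u)⁻¹ * exp (-A * dist x y ^ 2 / u)) ≤
      C₀ ^ 2 * 2 ^ ν * exp ((ν + σ) ^ 2 * r / (4 * A)) * ρ ^ (ν + σ) * u ^ (-(ν / 2)) := by
  set d := dist x y
  have hd : 0 ≤ d := dist_nonneg
  have hr : 0 < r := hu.trans_le hur
  have hR : 0 < ρ + d := by linarith
  have hvol : V x (ρ + d) / V y √u ≤ C₀ ^ 2 * 2 ^ ν * ((ρ + d) ^ ν * u ^ (-(ν / 2))) := by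
    have hsqrt : ((ρ + d) / √u) ^ ν = (ρ + d) ^ ν * u ^ (-(ν / 2)) := by
      rw [div_rpow hR.le (sqrt_nonneg u), sqrt_eq_rpow, ← rpow_mul hu.le, div_eq_mul_inv,
        ← rpow_neg hu.le]
      ring_nf
    rw [← hsqrt]
    exact div_le_of_doubling hV hC₀ hν hdoub hcomp (sqrt_pos.2 hu)
      (huρ.trans (le_add_of_nonneg_right hd)) (le_add_of_nonneg_left (by linarith))
  have hpow : (ρ + d) ^ ν * (ρ + d) ^ σ ≤ ρ ^ (ν + σ) * (1 + d) ^ (ν + σ) := by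
    rw [← rpow_add hR, ← mul_rpow (by linarith) (by linarith)]
    gcongr
    nlinarith
  have hexp : exp (-A * d ^ 2 / u) ≤ exp (-(A / r * d ^ 2)) := by
    gcongr
    rw [neg_mul, neg_div, neg_le_neg_iff, div_mul_eq_mul_div]
    gcongr
  have hgauss : (1 + d) ^ (ν + σ) * exp (-(A / r * d ^ 2)) ≤ exp ((ν + σ) ^ 2 * r / (4 * A)) := by
    have h := one_add_rpow_mul_exp_neg_mul_sq_le (p := ν + σ) (by positivity) (div_pos hA hr) hd
    rwa [show (ν + σ) ^ 2 / (4 * (A / r)) = (ν + σ) ^ 2 * r / (4 * A) by field_simp] at h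
  calc V x (ρ + d) * (ρ + d) ^ σ * ((V y √u)⁻¹ * exp (-A * d ^ 2 / u))
      = V x (ρ + d) / V y √u * (ρ + d) ^ σ * exp (-A * d ^ 2 / u) := by
        rw [div_eq_mul_inv]; ring
    _ ≤ C₀ ^ 2 * 2 ^ ν * ((ρ + d) ^ ν * u ^ (-(ν / 2))) * (ρ + d) ^ σ * exp (-(A / r * d ^ 2)) := by
        gcongr
    _ = C₀ ^ 2 * 2 ^ ν * u ^ (-(ν / 2)) * ((ρ + d) ^ ν * (ρ + d) ^ σ) * exp (-(A / r * d ^ 2)) := by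
        ring
    _ ≤ C₀ ^ 2 * 2 ^ ν * u ^ (-(ν / 2)) * (ρ ^ (ν + σ) * (1 + d) ^ (ν + σ)) *
          exp (-(A / r * d ^ 2)) := by
        gcongr
    _ = C₀ ^ 2 * 2 ^ ν * u ^ (-(ν / 2)) * ρ ^ (ν + σ) *
          ((1 + d) ^ (ν + σ) * exp (-(A / r * d ^ 2))) := by
        ring
    _ ≤ C₀ ^ 2 * 2 ^ ν * u ^ (-(ν / 2)) * ρ ^ (ν + σ) * exp ((ν + σ) ^ 2 * r / (4 * A)) := by
        gcongr
    _ = C₀ ^ 2 * 2 ^ ν * exp ((ν + σ) ^ 2 * r / (4 * A)) * ρ ^ (ν + σ) * u ^ (-(ν / 2)) := by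
        ring

lemma mul_rpow_mul_integral_le_of_doubling (hV : ∀ x r, 0 ≤ V x r) (hC₀ : 0 ≤ C₀) (hν : 0 ≤ ν)
    (hdoub : ∀ x r R, 0 < r → r ≤ R → V x R / V x r ≤ C₀ * (R / r) ^ ν)
    (hcomp : ∀ x y r, 0 < r → V x r ≤ C₀ * (1 + dist x y / r) ^ ν * V y r)
    {x y : X} {ρ r A σ κ B : ℝ} {g : ℝ → ℝ} (hρ : 1 ≤ ρ) (hr : 0 ≤ r) (hrρ : r ≤ ρ ^ 2)
    (hA : 0 < A) (hσ : 0 ≤ σ) (hg : ∀ u ∈ Ioc 0 r, 0 ≤ g u)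
    (hB : ∀ u ∈ Ioc 0 r, ρ ^ (ν + σ) * u ^ (-(ν / 2 + κ)) * g u ≤ B) :
    V x (ρ + dist x y) * (ρ + dist x y) ^ σ *
        ∫ u in Ioc 0 r, (V y √u)⁻¹ * exp (-A * dist x y ^ 2 / u) * g u * u ^ (-κ) ≤
      C₀ ^ 2 * 2 ^ ν * exp ((ν + σ) ^ 2 * r / (4 * A)) * B * r := by
  set C₁ := C₀ ^ 2 * 2 ^ ν * exp ((ν + σ) ^ 2 * r / (4 * A))
  rw [← integral_const_mul]
  refine (setIntegral_Ioc_le_of_norm_le (D := C₁ * B) hr fun u ⟨hu, hur⟩ => ?_).trans_eq (by ring)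
  have huρ : √u ≤ ρ := (sqrt_le_sqrt (hur.trans hrρ)).trans_eq (sqrt_sq (by linarith))
  have hspace := mul_rpow_mul_inv_mul_exp_le_of_doubling hV hC₀ hν hdoub hcomp (x := x) (y := y)
    hρ hu hur huρ hA hσ
  have hVx := hV x (ρ + dist x y)
  have hVy := hV y √u
  have hgu := hg u ⟨hu, hur⟩
  have hR : 0 ≤ ρ + dist x y := by positivity
  rw [norm_of_nonneg (by positivity)]
  calc _ = V x (ρ + dist x y) * (ρ + dist x y) ^ σ *
        ((V y √u)⁻¹ * exp (-A * dist x y ^ 2 / u)) * (g u * u ^ (-κ)) := by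
        ring
    _ ≤ C₁ * ρ ^ (ν + σ) * u ^ (-(ν / 2)) * (g u * u ^ (-κ)) := by gcongr
    _ = C₁ * (ρ ^ (ν + σ) * u ^ (-(ν / 2 + κ)) * g u) := by
        rw [neg_add, rpow_add hu]; ring
    _ ≤ C₁ * B := by gcongr; exact hB u ⟨hu, hur⟩

end Doubling

theorem stmt_9_general
    {M : Type*} [MetricSpace M] [MeasurableSpace M]
    (μ : Measure M)
    -- volume comparability
    (ν ν' c₀ C₀ : ℝ) (hν' : 0 < ν') (hνν : ν' ≤ ν) (hc₀ : 0 < c₀) (hc₀C₀ : c₀ ≤ C₀)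
    (hdoub : ∀ (x : M) (r R : ℝ), 0 < r → r ≤ R →
        c₀ * (R/r) ^ ν' ≤ (μ (ball x R)).toReal / (μ (ball x r)).toReal ∧
        (μ (ball x R)).toReal / (μ (ball x r)).toReal ≤ C₀ * (R/r) ^ ν)
    (hcomp : ∀ (x y : M) (r : ℝ), 0 < r →
        (μ (ball x r)).toReal ≤ C₀ * (1 + dist x y / r) ^ ν * (μ (ball y r)).toReal)
    -- stable subordinator densities with two-sided bounds
    (α : ℝ) (hα0 : 0 < α) (hα2 : α < 2)
    (η : ℝ → ℝ → ℝ)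
    (hηpos : ∀ t : ℝ, 0 < t → ∀ u : ℝ, 0 < u → 0 < η t u)
    (cs Cs : ℝ) (hcs : 0 < cs) (hcsCs : cs ≤ Cs)
    (hηbd : ∀ t : ℝ, 0 < t → ∀ u : ℝ, 0 < u →
        (u ≤ t ^ (2/α) →
          cs ≤ η t u / (t ^ (1/(2-α)) * u ^ (-((4-α)/(4-2*α))) *
              Real.exp (-(((2-α)/2) * (α/2) ^ (α/(2-α))) * t ^ (2/(2-α)) * u ^ (-(α/(2-α))))) ∧
          η t u / (t ^ (1/(2-α)) * u ^ (-((4-α)/(4-2*α))) *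
              Real.exp (-(((2-α)/2) * (α/2) ^ (α/(2-α))) * t ^ (2/(2-α)) * u ^ (-(α/(2-α))))) ≤ Cs) ∧
        (t ^ (2/α) < u →
          cs ≤ η t u / (t * u ^ (-1-α/2)) ∧ η t u / (t * u ^ (-1-α/2)) ≤ Cs)) :
    ∀ A : ℝ, 0 < A → ∀ κ : ℝ, 0 ≤ κ → ∀ r : ℝ, 0 < r → ∀ N : ℝ, 0 < N →
      ∃ C t₀ : ℝ, 0 < C ∧ 0 < t₀ ∧ ∀ t : ℝ, t₀ ≤ t → ∀ x y : M,
        (μ (ball x (t ^ (1/α) + dist x y))).toReal *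
            (t ^ (1/α) + dist x y) ^ (α + 2*κ) *
            (∫ u in Set.Ioc (0:ℝ) r,
              ((μ (ball y (Real.sqrt u))).toReal)⁻¹ *
                Real.exp (-A * (dist x y)^2 / u) * η t u * u ^ (-κ))
          ≤ C * t ^ (-N) := by
  intro A hA κ hκ r hr N _
  have hν : 0 ≤ ν := (hν'.trans_le hνν).le
  have hC₀ : 0 < C₀ := hc₀.trans_le hc₀C₀
  have hCs : 0 < Cs := hcs.trans_le hcsCs
  obtain ⟨K, hK, hprofile⟩ := exists_rpow_mul_stableProfile_le hα0 hα2
    ((ν + (α + 2 * κ)) / α) N (m := ν / 2 + κ) (by positivity) hr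
  refine ⟨C₀ ^ 2 * 2 ^ ν * exp ((ν + (α + 2 * κ)) ^ 2 * r / (4 * A)) * (Cs * K) * r,
    max 1 (r ^ (α / 2)), by positivity, by positivity, fun t ht x y => ?_⟩
  have ht1 : 1 ≤ t := (le_max_left _ _).trans ht
  have ht0 : 0 < t := one_pos.trans_le ht1
  have hrt : r ≤ t ^ (2 / α) := by
    rw [← inv_div, le_rpow_inv_iff_of_pos hr.le ht0.le (by positivity)]
    exact (le_max_right _ _).trans ht
  have hρ : (t ^ (1 / α)) ^ 2 = t ^ (2 / α) := by
    rw [← rpow_natCast, ← rpow_mul ht0.le]; ring_nf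
  refine (mul_rpow_mul_integral_le_of_doubling (V := fun z s => (μ (ball z s)).toReal)
    (fun _ _ => ENNReal.toReal_nonneg) hC₀.le hν (fun z s R h₁ h₂ => (hdoub z s R h₁ h₂).2)
    hcomp (g := η t) (B := Cs * K * t ^ (-N)) (one_le_rpow ht1 (by positivity)) hr.le
    (hrt.trans_eq hρ.symm) hA (by positivity) (fun u hu => (hηpos t ht0 u hu.1).le)
    fun u ⟨hu0, hur⟩ => ?_).trans_eq (by ring)
  have hη : η t u ≤ Cs * stableProfile α t u := by
    rw [← div_le_iff₀ (stableProfile_pos α ht0 hu0)]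
    exact ((hηbd t ht0 u hu0).1 (hur.trans hrt)).2
  calc (t ^ (1 / α)) ^ (ν + (α + 2 * κ)) * u ^ (-(ν / 2 + κ)) * η t u
      ≤ (t ^ (1 / α)) ^ (ν + (α + 2 * κ)) * u ^ (-(ν / 2 + κ)) * (Cs * stableProfile α t u) := by
        gcongr
    _ = Cs * (t ^ ((ν + (α + 2 * κ)) / α) * u ^ (-(ν / 2 + κ)) * stableProfile α t u) := by
        rw [← rpow_mul ht0.le, one_div_mul_eq_div]; ring
    _ ≤ Cs * (K * t ^ (-N)) := mul_le_mul_of_nonneg_left (hprofile t ht1 u ⟨hu0, hur⟩) hCs.le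
    _ = Cs * K * t ^ (-N) := by ring

/-- the truncated subordination-type integral
`∫₀^r V(y,√u)⁻¹ e^{-A d(x,y)²/u} η_t(u) u^{-κ} du` decays faster than any power of `t`,
uniformly in `x, y`, after normalization. -/
theorem stmt_9
    {M : Type*} [MetricSpace M] [MeasurableSpace M] [BorelSpace M]
    (μ : Measure M)
    (hVpos : ∀ (x : M) (r : ℝ), 0 < r → 0 < μ (ball x r))
    (hVfin : ∀ (x : M) (r : ℝ), 0 < r → μ (ball x r) < ⊤)
    -- volume comparability
    (ν ν' c₀ C₀ : ℝ) (hν' : 0 < ν') (hνν : ν' ≤ ν) (hc₀ : 0 < c₀) (hc₀C₀ : c₀ ≤ C₀)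
    (hdoub : ∀ (x : M) (r R : ℝ), 0 < r → r ≤ R →
        c₀ * (R/r) ^ ν' ≤ (μ (ball x R)).toReal / (μ (ball x r)).toReal ∧
        (μ (ball x R)).toReal / (μ (ball x r)).toReal ≤ C₀ * (R/r) ^ ν)
    (hcomp : ∀ (x y : M) (r : ℝ), 0 < r →
        (μ (ball x r)).toReal ≤ C₀ * (1 + dist x y / r) ^ ν * (μ (ball y r)).toReal)
    -- stable subordinator densities with two-sided bounds
    (α : ℝ) (hα0 : 0 < α) (hα2 : α < 2)
    (η : ℝ → ℝ → ℝ)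
    (hηmeas : Measurable (fun p : ℝ × ℝ => η p.1 p.2))
    (hηpos : ∀ t : ℝ, 0 < t → ∀ u : ℝ, 0 < u → 0 < η t u)
    (cs Cs : ℝ) (hcs : 0 < cs) (hcsCs : cs ≤ Cs)
    (hηbd : ∀ t : ℝ, 0 < t → ∀ u : ℝ, 0 < u →
        (u ≤ t ^ (2/α) →
          cs ≤ η t u / (t ^ (1/(2-α)) * u ^ (-((4-α)/(4-2*α))) *
              Real.exp (-(((2-α)/2) * (α/2) ^ (α/(2-α))) * t ^ (2/(2-α)) * u ^ (-(α/(2-α))))) ∧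
          η t u / (t ^ (1/(2-α)) * u ^ (-((4-α)/(4-2*α))) *
              Real.exp (-(((2-α)/2) * (α/2) ^ (α/(2-α))) * t ^ (2/(2-α)) * u ^ (-(α/(2-α))))) ≤ Cs) ∧
        (t ^ (2/α) < u →
          cs ≤ η t u / (t * u ^ (-1-α/2)) ∧ η t u / (t * u ^ (-1-α/2)) ≤ Cs)) :
    ∀ A : ℝ, 0 < A → ∀ κ : ℝ, 0 ≤ κ → ∀ r : ℝ, 0 < r → ∀ N : ℝ, 0 < N →
      ∃ C t₀ : ℝ, 0 < C ∧ 0 < t₀ ∧ ∀ t : ℝ, t₀ ≤ t → ∀ x y : M,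
        (μ (ball x (t ^ (1/α) + dist x y))).toReal *
            (t ^ (1/α) + dist x y) ^ (α + 2*κ) *
            (∫ u in Set.Ioc (0:ℝ) r,
              ((μ (ball y (Real.sqrt u))).toReal)⁻¹ *
                Real.exp (-A * (dist x y)^2 / u) * η t u * u ^ (-κ))
          ≤ C * t ^ (-N) :=
  stmt_9_general μ ν ν' c₀ C₀ hν' hνν hc₀ hc₀C₀ hdoub hcomp α hα0 hα2 η hηpos cs Cs hcs hcsCs hηbd
end

section
/- Let α ∈ (0,2). There is a constant C ≥ 1 (depending on α, the Li–Yau constants, the subordinator constants and the volume comparability constants) such that for all t > 0 and all x, y, z ∈ M with d(y,z) ≤ t^{1/α}: C^{−1} ≤ P_t^α(x,y) / P_t^α(x,z) ≤ C. -/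
/-!
Write `τ = t^{1/α}` and `R = max (d(x,y), τ)`. The heart of the matter is the two-sided estimate
`P_t^α(x,y) ≍ (τ/R)^α / V(y,R) = t R^{-α} / V(y,R)`, obtained by splitting the subordination
integral at `u = τ²` and `u = R²`. For `u ≤ R²` volume doubling costs a factor `(R/√u)^ν`; it is
absorbed by the decay of `η_t(u)` in `τ²/u` when `R = τ`, and by the Gaussian factor
`exp(-c d(x,y)²/u)` when `R = d(x,y)`. For `u > R²` the heat kernel is at most `C₂/V(y,R)` and
the tail `∫_{R²}^∞ t u^{-1-α/2} du` is a constant times `t R^{-α}`. The window `R² < u ≤ 2R²`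
gives the matching lower bound. If `d(y,z) ≤ τ`, the radii for `y` and `z` are within a factor
`2` of each other and volume comparability bounds `V(z,R_z)` by a constant times `V(y,R_y)`, so
the two comparison quantities, and hence the two kernels, are comparable.
-/

open MeasureTheory Metric Real Filter

/-- The fractional heat kernel: the kernel subordinated to the heat kernel `h` via the
stable subordinator densities `η`: `P_t^α(x,y) = ∫₀^∞ h_u(x,y) η_t(u) du`. -/
noncomputable def Pker {M : Type*} (h : ℝ → M → M → ℝ) (η : ℝ → ℝ → ℝ)
    (t : ℝ) (x y : M) : ℝ :=
  ∫ u in Set.Ioi (0:ℝ), h u x y * η t u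

lemma exp_neg_le_rpow_mul_rpow_neg {p x : ℝ} (hp : 0 < p) (hx : 0 < x) :
    exp (-x) ≤ p ^ p * x ^ (-p) := by
  have key : (x / p) ^ p ≤ exp x := by
    calc (x / p) ^ p ≤ exp (x / p) ^ p := by
          gcongr
          linarith [add_one_le_exp (x / p)]
      _ = exp x := by rw [← exp_mul, div_mul_cancel₀ x hp.ne']
  rw [div_rpow hx.le hp.le, div_le_iff₀ (by positivity)] at key
  rw [exp_neg, rpow_neg hx.le, ← div_eq_mul_inv, le_div_iff₀ (by positivity),
    inv_mul_le_iff₀ (exp_pos x)]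
  exact key

lemma exists_rpow_mul_exp_neg_le {p β c : ℝ} (hp : 0 < p) (hβ : 0 < β) (hc : 0 < c) :
    ∃ K, 0 < K ∧ ∀ x, 0 < x → x ^ p * exp (-(c * x ^ β)) ≤ K := by
  refine ⟨(p / β) ^ (p / β) * c ^ (-(p / β)), by positivity, fun x hx => ?_⟩
  calc x ^ p * exp (-(c * x ^ β))
      ≤ x ^ p * ((p / β) ^ (p / β) * (c * x ^ β) ^ (-(p / β))) := by
        gcongr; exact exp_neg_le_rpow_mul_rpow_neg (by positivity) (by positivity)
    _ = (p / β) ^ (p / β) * c ^ (-(p / β)) := by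
        rw [mul_rpow hc.le (by positivity), ← rpow_mul hx.le,
          show β * -(p / β) = -p by field_simp, rpow_neg hx.le]
        field_simp

lemma rpow_le_div_rpow_mul_rpow {σ ξ a b : ℝ} (hσ : 0 < σ) (hσξ : σ ≤ ξ) (hab : a ≤ b) :
    σ ^ b ≤ (σ / ξ) ^ a * ξ ^ b := by
  have hξ := hσ.trans_le hσξ
  calc σ ^ b = σ ^ a * σ ^ (b - a) := by rw [← rpow_add hσ, add_sub_cancel]
    _ ≤ σ ^ a * ξ ^ (b - a) := by gcongr
    _ = (σ / ξ) ^ a * ξ ^ b := by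
        rw [div_rpow hσ.le hξ.le, rpow_sub hξ]; field_simp

lemma inv_mul_div_sqrt_rpow {τ u : ℝ} (hτ : 0 < τ) (hu : 0 < u) (p : ℝ) :
    u⁻¹ * (τ / √u) ^ p = (τ / √u) ^ (2 + p) / τ ^ 2 := by
  have hsu : 0 < √u := sqrt_pos.2 hu
  rw [rpow_add (by positivity), rpow_two, div_pow, sq_sqrt hu.le]
  field_simp

lemma rpow_mul_rpow_eq_div_sqrt {τ r u α : ℝ} (hτ : 0 < τ) (hr : 0 < r) (hu : 0 < u) :
    τ ^ α * u ^ (-1 - α / 2) = (τ / r) ^ α * (r / √u) ^ (2 + α) / r ^ 2 := by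
  have hsu : 0 < √u := sqrt_pos.2 hu
  rw [rpow_add (by positivity), rpow_two, div_pow, sq_sqrt hu.le, div_rpow hτ.le hr.le,
    div_rpow hr.le hsu.le, sqrt_eq_rpow, ← rpow_mul hu.le, rpow_sub hu, rpow_neg_one]
  field_simp

lemma rpow_mul_two_mul_sq_rpow {τ R α : ℝ} (hτ : 0 ≤ τ) (hR : 0 < R) :
    τ ^ α * (2 * R ^ 2) ^ (-1 - α / 2) = 2 ^ (-1 - α / 2) * (τ / R) ^ α / R ^ 2 := by
  rw [mul_rpow zero_le_two (sq_nonneg R), ← rpow_natCast_mul hR.le,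
    show ((2 : ℕ) : ℝ) * (-1 - α / 2) = -(α + 2) by push_cast; ring, rpow_neg hR.le,
    rpow_add hR, div_rpow hτ hR.le, rpow_two]
  field_simp

lemma rpow_one_div_div_sqrt_rpow {t u α : ℝ} (ht : 0 < t) (hu : 0 < u) (p : ℝ) :
    (t ^ (1 / α) / √u) ^ p = t ^ (p / α) * u ^ (-(p / 2)) := by
  rw [div_rpow (by positivity) (sqrt_nonneg u), ← rpow_mul ht.le, sqrt_eq_rpow,
    ← rpow_mul hu.le, rpow_neg hu.le, div_eq_mul_inv]
  ring_nf

lemma exp_neg_mul_sq_div {c r u : ℝ} (hu : 0 < u) :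
    exp (-c * r ^ 2 / u) = exp (-(c * (r / √u) ^ 2)) := by
  rw [div_pow, sq_sqrt hu.le]; ring_nf

lemma integrableOn_Ioc_and_setIntegral_le {f : ℝ → ℝ} {a b K : ℝ} (hab : a ≤ b)
    (hf : Measurable f) (h₀ : ∀ u ∈ Set.Ioc a b, 0 ≤ f u) (hK : ∀ u ∈ Set.Ioc a b, f u ≤ K) :
    IntegrableOn f (Set.Ioc a b) ∧ ∫ u in Set.Ioc a b, f u ≤ K * (b - a) := by
  have hint : IntegrableOn f (Set.Ioc a b) :=
    Measure.integrableOn_of_bounded measure_Ioc_lt_top.ne hf.aestronglyMeasurable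
      ((ae_restrict_iff' measurableSet_Ioc).2 (ae_of_all _ fun u hu => by
        rw [norm_of_nonneg (h₀ u hu)]; exact hK u hu))
  refine ⟨hint, ?_⟩
  calc ∫ u in Set.Ioc a b, f u ≤ ∫ _ in Set.Ioc a b, K :=
        setIntegral_mono_on hint (integrableOn_const measure_Ioc_lt_top.ne) measurableSet_Ioc hK
    _ = K * (b - a) := by
        rw [setIntegral_const, smul_eq_mul, volume_real_Ioc_of_le hab, mul_comm]

lemma integrableOn_Ioi_and_setIntegral_le_add {f : ℝ → ℝ} {a b A B : ℝ} (hab : a ≤ b)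
    (h₁ : IntegrableOn f (Set.Ioc a b) ∧ ∫ u in Set.Ioc a b, f u ≤ A)
    (h₂ : IntegrableOn f (Set.Ioi b) ∧ ∫ u in Set.Ioi b, f u ≤ B) :
    IntegrableOn f (Set.Ioi a) ∧ ∫ u in Set.Ioi a, f u ≤ A + B := by
  rw [← Set.Ioc_union_Ioi_eq_Ioi hab,
    setIntegral_union Set.Ioc_disjoint_Ioi_same measurableSet_Ioi h₁.1 h₂.1]
  exact ⟨h₁.1.union h₂.1, add_le_add h₁.2 h₂.2⟩

lemma integral_Ioi_sq_rpow {α R : ℝ} (hα : 0 < α) (hR : 0 < R) :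
    ∫ u in Set.Ioi (R ^ 2), u ^ (-1 - α / 2) = 2 / α * R ^ (-α) := by
  rw [integral_Ioi_rpow_of_lt (by linarith) (by positivity),
    show -1 - α / 2 + 1 = -(α / 2) by ring, ← rpow_natCast_mul hR.le,
    show ((2 : ℕ) : ℝ) * -(α / 2) = -α by push_cast; ring]
  field_simp

lemma inv_le_div_and_div_le {P P' g g' a A D : ℝ} (ha : 0 < a) (hA : 0 ≤ A) (hD : 0 ≤ D)
    (hg : 0 < g) (hg' : 0 < g') (hP : a * g ≤ P ∧ P ≤ A * g) (hP' : a * g' ≤ P' ∧ P' ≤ A * g')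
    (hgg' : g ≤ D * g') (hg'g : g' ≤ D * g) :
    (A * D / a)⁻¹ ≤ P / P' ∧ P / P' ≤ A * D / a := by
  have key : ∀ {P P' g g' : ℝ}, 0 < g' → P ≤ A * g → a * g' ≤ P' → g ≤ D * g' →
      P / P' ≤ A * D / a := fun {P P' g g'} hg' hP hP' hgg' =>
    calc P / P' ≤ A * D * g' / (a * g') :=
          div_le_div₀ (by positivity) (hP.trans (by rw [mul_assoc]; gcongr)) (by positivity) hP'
      _ = A * D / a := mul_div_mul_right _ _ hg'.ne'
  refine ⟨?_, key hg' hP.2 hP'.1 hgg'⟩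
  exact (inv_anti₀ (div_pos ((mul_pos ha hg').trans_le hP'.1) ((mul_pos ha hg).trans_le hP.1))
    (key hg hP'.2 hP.1 hg'g)).trans_eq (inv_div P' P)

structure IsDoublingProfile (C₀ ν : ℝ) (V : ℝ → ℝ) : Prop where
  pos : ∀ ρ, 0 < ρ → 0 < V ρ
  mono : ∀ ρ R, 0 < ρ → ρ ≤ R → V ρ ≤ V R
  le_mul_rpow : ∀ ρ R, 0 < ρ → ρ ≤ R → V R ≤ C₀ * (R / ρ) ^ ν * V ρ

structure HasGaussianBounds (c₁ C₁ c₂ C₂ r : ℝ) (V k : ℝ → ℝ) : Prop where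
  lower : ∀ u, 0 < u → c₁ / V (√u) * exp (-C₁ * r ^ 2 / u) ≤ k u
  upper : ∀ u, 0 < u → k u ≤ C₂ / V (√u) * exp (-c₂ * r ^ 2 / u)

/-- The stable subordinator bounds at the scale `τ = t^{1/α}`: with `σ = τ/√u` and
`q = α/(2-α)`, the small-time profile `t^{1/(2-α)} u^{-(4-α)/(4-2α)} exp(-c t^{2/(2-α)} u^{-q})`
is `u⁻¹ σ^q exp(-c σ^{2q})`, and the large-time profile `t u^{-1-α/2}` is `τ^α u^{-1-α/2}`. -/
structure IsStableDensity (α q ca cs Cs τ : ℝ) (e : ℝ → ℝ) : Prop where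
  pos : ∀ u, 0 < u → 0 < e u
  le_of_le_sq : ∀ u, 0 < u → u ≤ τ ^ 2 →
    e u ≤ Cs * (u⁻¹ * ((τ / √u) ^ q * exp (-(ca * (τ / √u) ^ (2 * q)))))
  ge_of_sq_lt : ∀ u, τ ^ 2 < u → cs * (τ ^ α * u ^ (-1 - α / 2)) ≤ e u
  le_of_sq_lt : ∀ u, τ ^ 2 < u → e u ≤ Cs * (τ ^ α * u ^ (-1 - α / 2))

section ScalarEstimates

variable {α q ca cs Cs C₀ ν c₁ C₁ c₂ C₂ K τ r u : ℝ} {V k e : ℝ → ℝ}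

lemma IsDoublingProfile.inv_le (hV : IsDoublingProfile C₀ ν V) {ρ R : ℝ} (hρ : 0 < ρ)
    (hρR : ρ ≤ R) : (V ρ)⁻¹ ≤ C₀ * (R / ρ) ^ ν / V R := by
  rw [le_div_iff₀ (hV.pos R (hρ.trans_le hρR)), inv_mul_le_iff₀ (hV.pos ρ hρ)]
  linarith [hV.le_mul_rpow ρ R hρ hρR]

lemma IsDoublingProfile.one_le (hV : IsDoublingProfile C₀ ν V) : 1 ≤ C₀ := by
  have h := hV.le_mul_rpow 1 1 one_pos le_rfl
  rw [div_one, one_rpow, mul_one] at h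
  exact (le_mul_iff_one_le_left (hV.pos 1 one_pos)).1 h

lemma HasGaussianBounds.nonneg (hk : HasGaussianBounds c₁ C₁ c₂ C₂ r V k)
    (hV : IsDoublingProfile C₀ ν V) (hc₁ : 0 ≤ c₁) (hu : 0 < u) : 0 ≤ k u :=
  le_trans (by have := hV.pos _ (sqrt_pos.2 hu); positivity) (hk.lower u hu)

lemma HasGaussianBounds.le_div (hk : HasGaussianBounds c₁ C₁ c₂ C₂ r V k)
    (hV : IsDoublingProfile C₀ ν V) (hC₂ : 0 ≤ C₂) (hc₂ : 0 ≤ c₂) (hu : 0 < u) :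
    k u ≤ C₂ / V √u := by
  have := hV.pos _ (sqrt_pos.2 hu)
  refine (hk.upper u hu).trans (mul_le_of_le_one_right (by positivity) ?_)
  exact exp_le_one_iff.2 (div_nonpos_of_nonpos_of_nonneg (by nlinarith [sq_nonneg r]) hu.le)

lemma HasGaussianBounds.le_of_sqrt_le (hk : HasGaussianBounds c₁ C₁ c₂ C₂ r V k)
    (hV : IsDoublingProfile C₀ ν V) (hC₂ : 0 ≤ C₂) {R : ℝ} (hu : 0 < u) (huR : √u ≤ R) :
    k u ≤ C₂ * C₀ * (R / √u) ^ ν * exp (-(c₂ * (r / √u) ^ 2)) / V R := by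
  calc k u ≤ C₂ * (V √u)⁻¹ * exp (-c₂ * r ^ 2 / u) := by
        simpa only [div_eq_mul_inv] using hk.upper u hu
    _ ≤ C₂ * (C₀ * (R / √u) ^ ν / V R) * exp (-c₂ * r ^ 2 / u) := by
        gcongr; exact hV.inv_le (sqrt_pos.2 hu) huR
    _ = _ := by rw [exp_neg_mul_sq_div hu]; ring

lemma mul_le_of_le_sq_at_scale (hV : IsDoublingProfile C₀ ν V)
    (hk : HasGaussianBounds c₁ C₁ c₂ C₂ r V k) (he : IsStableDensity α q ca cs Cs τ e)
    (hC₂ : 0 ≤ C₂) (hc₂ : 0 ≤ c₂) (hCs : 0 ≤ Cs)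
    (hK : ∀ σ, 0 < σ → σ ^ (ν + 2 + q) * exp (-(ca * σ ^ (2 * q))) ≤ K)
    (hτ : 0 < τ) (hu : 0 < u) (huτ : u ≤ τ ^ 2) :
    k u * e u ≤ C₂ * C₀ * Cs * K / τ ^ 2 / V τ := by
  set σ := τ / √u
  have hσ : 0 < σ := div_pos hτ (sqrt_pos.2 hu)
  have hC₀ : 0 ≤ C₀ := zero_le_one.trans hV.one_le
  have hVτ := hV.pos τ hτ
  have hk' : k u ≤ C₂ * C₀ * σ ^ ν / V τ := by
    calc k u ≤ C₂ * (V √u)⁻¹ := by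
          simpa only [div_eq_mul_inv] using hk.le_div hV hC₂ hc₂ hu
      _ ≤ C₂ * (C₀ * σ ^ ν / V τ) := by
          gcongr; exact hV.inv_le (sqrt_pos.2 hu) ((sqrt_le_left hτ.le).2 huτ)
      _ = _ := by ring
  calc k u * e u
      ≤ C₂ * C₀ * σ ^ ν / V τ * (Cs * (u⁻¹ * (σ ^ q * exp (-(ca * σ ^ (2 * q)))))) :=
        mul_le_mul hk' (he.le_of_le_sq u hu huτ) (he.pos u hu).le (by positivity)
    _ = C₂ * C₀ * Cs / τ ^ 2 / V τ * (σ ^ (ν + 2 + q) * exp (-(ca * σ ^ (2 * q)))) := by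
        rw [← mul_assoc u⁻¹, inv_mul_div_sqrt_rpow hτ hu, add_assoc ν, rpow_add hσ ν]
        ring
    _ ≤ C₂ * C₀ * Cs / τ ^ 2 / V τ * K := by gcongr; exact hK σ hσ
    _ = _ := by ring

lemma mul_le_of_le_sq_of_scale_le (hV : IsDoublingProfile C₀ ν V)
    (hk : HasGaussianBounds c₁ C₁ c₂ C₂ r V k) (he : IsStableDensity α q ca cs Cs τ e)
    (hα : α ≤ 2) (hq : 0 ≤ q) (hca : 0 ≤ ca) (hC₂ : 0 ≤ C₂) (hCs : 0 ≤ Cs)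
    (hK : ∀ ξ, 0 < ξ → ξ ^ (ν + 2 + q) * exp (-(c₂ * ξ ^ 2)) ≤ K)
    (hτ : 0 < τ) (hτr : τ ≤ r) (hu : 0 < u) (huτ : u ≤ τ ^ 2) :
    k u * e u ≤ C₂ * C₀ * Cs * K / τ ^ 2 * ((τ / r) ^ α / V r) := by
  have hsu : 0 < √u := sqrt_pos.2 hu
  set σ := τ / √u
  set ξ := r / √u
  have hσ : 0 < σ := div_pos hτ hsu
  have hσξ : σ ≤ ξ := div_le_div_of_nonneg_right hτr hsu.le
  have hξ : 0 < ξ := hσ.trans_le hσξ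
  have hr : 0 < r := hτ.trans_le hτr
  have hC₀ : 0 ≤ C₀ := zero_le_one.trans hV.one_le
  have hVr := hV.pos r hr
  have he' : e u ≤ Cs * ((τ / r) ^ α * ξ ^ (2 + q) / τ ^ 2) := by
    calc e u ≤ Cs * (u⁻¹ * (σ ^ q * 1)) := by
          refine (he.le_of_le_sq u hu huτ).trans ?_
          gcongr
          exact exp_le_one_iff.2 (neg_nonpos.2 (by positivity))
      _ = Cs * (σ ^ (2 + q) / τ ^ 2) := by rw [mul_one, inv_mul_div_sqrt_rpow hτ hu]
      _ ≤ Cs * ((τ / r) ^ α * ξ ^ (2 + q) / τ ^ 2) := by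
          rw [← div_div_div_cancel_right₀ hsu.ne' τ r]
          gcongr
          exact rpow_le_div_rpow_mul_rpow hσ hσξ (by linarith)
  calc k u * e u
      ≤ C₂ * C₀ * ξ ^ ν * exp (-(c₂ * ξ ^ 2)) / V r *
          (Cs * ((τ / r) ^ α * ξ ^ (2 + q) / τ ^ 2)) :=
        mul_le_mul (hk.le_of_sqrt_le hV hC₂ hu (((sqrt_le_left hτ.le).2 huτ).trans hτr)) he'
          (he.pos u hu).le (by positivity)
    _ = C₂ * C₀ * Cs / τ ^ 2 * ((τ / r) ^ α / V r) *
          (ξ ^ (ν + 2 + q) * exp (-(c₂ * ξ ^ 2))) := by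
        rw [add_assoc ν, rpow_add hξ ν]
        ring
    _ ≤ C₂ * C₀ * Cs / τ ^ 2 * ((τ / r) ^ α / V r) * K :=
        mul_le_mul_of_nonneg_left (hK ξ hξ) (by positivity)
    _ = _ := by ring

lemma mul_le_of_le_sq (hV : IsDoublingProfile C₀ ν V)
    (hk : HasGaussianBounds c₁ C₁ c₂ C₂ r V k) (he : IsStableDensity α q ca cs Cs τ e)
    (hα : α ≤ 2) (hq : 0 ≤ q) (hca : 0 ≤ ca) (hc₂ : 0 ≤ c₂) (hC₂ : 0 ≤ C₂) (hCs : 0 ≤ Cs)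
    {K₁ K₂ : ℝ} (hK₁ : ∀ σ, 0 < σ → σ ^ (ν + 2 + q) * exp (-(ca * σ ^ (2 * q))) ≤ K₁)
    (hK₂ : ∀ ξ, 0 < ξ → ξ ^ (ν + 2 + q) * exp (-(c₂ * ξ ^ 2)) ≤ K₂)
    (hτ : 0 < τ) (hu : 0 < u) (huτ : u ≤ τ ^ 2) :
    k u * e u ≤ C₂ * C₀ * Cs * max K₁ K₂ / τ ^ 2 *
      ((τ / max r τ) ^ α / V (max r τ)) := by
  have hC₀ : 0 ≤ C₀ := zero_le_one.trans hV.one_le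
  rcases le_total r τ with hrτ | hτr
  · have hVτ := hV.pos τ hτ
    rw [max_eq_right hrτ, div_self hτ.ne', one_rpow]
    calc k u * e u ≤ C₂ * C₀ * Cs * K₁ / τ ^ 2 / V τ :=
          mul_le_of_le_sq_at_scale hV hk he hC₂ hc₂ hCs hK₁ hτ hu huτ
      _ ≤ C₂ * C₀ * Cs * max K₁ K₂ / τ ^ 2 / V τ := by gcongr; exact le_max_left _ _
      _ = _ := by ring
  · have hr := hτ.trans_le hτr
    have hVr := hV.pos r hr
    rw [max_eq_left hτr]
    calc k u * e u ≤ C₂ * C₀ * Cs * K₂ / τ ^ 2 * ((τ / r) ^ α / V r) :=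
          mul_le_of_le_sq_of_scale_le hV hk he hα hq hca hC₂ hCs hK₂ hτ hτr hu huτ
      _ ≤ _ := by gcongr; exact le_max_right _ _

lemma mul_le_of_sq_lt_of_le_sq (hV : IsDoublingProfile C₀ ν V)
    (hk : HasGaussianBounds c₁ C₁ c₂ C₂ r V k) (he : IsStableDensity α q ca cs Cs τ e)
    (hC₂ : 0 ≤ C₂) (hCs : 0 ≤ Cs)
    (hK : ∀ ξ, 0 < ξ → ξ ^ (ν + 2 + α) * exp (-(c₂ * ξ ^ 2)) ≤ K)
    (hτ : 0 < τ) (huτ : τ ^ 2 < u) (huR : u ≤ max r τ ^ 2) :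
    k u * e u ≤ C₂ * C₀ * Cs * K / max r τ ^ 2 * ((τ / max r τ) ^ α / V (max r τ)) := by
  have hu : 0 < u := (pow_pos hτ 2).trans huτ
  have hτr : τ ≤ r := by
    by_contra! h
    rw [max_eq_right h.le] at huR
    exact huR.not_gt huτ
  rw [max_eq_left hτr] at huR ⊢
  have hr : 0 < r := hτ.trans_le hτr
  have hVr := hV.pos r hr
  have hC₀ : 0 ≤ C₀ := zero_le_one.trans hV.one_le
  set ξ := r / √u
  have hξ : 0 < ξ := div_pos hr (sqrt_pos.2 hu)
  calc k u * e u
      ≤ C₂ * C₀ * ξ ^ ν * exp (-(c₂ * ξ ^ 2)) / V r *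
          (Cs * ((τ / r) ^ α * ξ ^ (2 + α) / r ^ 2)) := by
        rw [← rpow_mul_rpow_eq_div_sqrt hτ hr hu]
        exact mul_le_mul (hk.le_of_sqrt_le hV hC₂ hu ((sqrt_le_left hr.le).2 huR))
          (he.le_of_sq_lt u huτ) (he.pos u hu).le (by positivity)
    _ = C₂ * C₀ * Cs / r ^ 2 * ((τ / r) ^ α / V r) *
          (ξ ^ (ν + 2 + α) * exp (-(c₂ * ξ ^ 2))) := by
        rw [add_assoc ν, rpow_add hξ ν]
        ring
    _ ≤ C₂ * C₀ * Cs / r ^ 2 * ((τ / r) ^ α / V r) * K :=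
        mul_le_mul_of_nonneg_left (hK ξ hξ) (by positivity)
    _ = _ := by ring

lemma mul_le_of_sq_lt (hV : IsDoublingProfile C₀ ν V)
    (hk : HasGaussianBounds c₁ C₁ c₂ C₂ r V k) (he : IsStableDensity α q ca cs Cs τ e)
    (hc₂ : 0 ≤ c₂) (hC₂ : 0 ≤ C₂) (hτ : 0 < τ) (hu : max r τ ^ 2 < u) :
    k u * e u ≤ C₂ * Cs * τ ^ α / V (max r τ) * u ^ (-1 - α / 2) := by
  have hR : 0 < max r τ := hτ.trans_le (le_max_right _ _)
  have hu₀ : 0 < u := (pow_pos hR 2).trans hu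
  have hVR := hV.pos _ hR
  have hk' : k u ≤ C₂ / V (max r τ) :=
    (hk.le_div hV hC₂ hc₂ hu₀).trans (div_le_div_of_nonneg_left hC₂ hVR
      (hV.mono _ _ hR ((le_sqrt hR.le hu₀.le).2 hu.le)))
  have he' := he.le_of_sq_lt u ((pow_le_pow_left₀ hτ.le (le_max_right r τ) 2).trans_lt hu)
  calc k u * e u ≤ C₂ / V (max r τ) * (Cs * (τ ^ α * u ^ (-1 - α / 2))) :=
        mul_le_mul hk' he' (he.pos u hu₀).le (by positivity)
    _ = _ := by ring

lemma le_mul_of_sq_lt_of_le_two_mul_sq (hV : IsDoublingProfile C₀ ν V)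
    (hk : HasGaussianBounds c₁ C₁ c₂ C₂ r V k) (he : IsStableDensity α q ca cs Cs τ e)
    (hα : 0 ≤ α) (hc₁ : 0 ≤ c₁) (hC₁ : 0 ≤ C₁) (hcs : 0 ≤ cs) (hτ : 0 < τ) (hr : 0 ≤ r)
    (hu₁ : max r τ ^ 2 < u) (hu₂ : u ≤ 2 * max r τ ^ 2) :
    c₁ * exp (-C₁) * cs * 2 ^ (-1 - α / 2) / (C₀ * √2 ^ ν) / max r τ ^ 2 *
      ((τ / max r τ) ^ α / V (max r τ)) ≤ k u * e u := by
  set R := max r τ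
  have hR : 0 < R := hτ.trans_le (le_max_right _ _)
  have hu : 0 < u := (pow_pos hR 2).trans hu₁
  have hVR := hV.pos R hR
  have hVsu := hV.pos _ (sqrt_pos.2 hu)
  have hC₀ : 0 < C₀ := zero_lt_one.trans_le hV.one_le
  have hvol : V √u ≤ C₀ * √2 ^ ν * V R := by
    have hsu : √u ≤ √2 * R := by
      rw [← sqrt_sq hR.le, ← sqrt_mul zero_le_two]; exact sqrt_le_sqrt hu₂
    have hR2 : R ≤ √2 * R := le_mul_of_one_le_left hR.le (one_le_sqrt.2 one_le_two)
    calc V √u ≤ V (√2 * R) := hV.mono _ _ (sqrt_pos.2 hu) hsu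
      _ ≤ C₀ * (√2 * R / R) ^ ν * V R := hV.le_mul_rpow R _ hR hR2
      _ = C₀ * √2 ^ ν * V R := by rw [mul_div_cancel_right₀ _ hR.ne']
  have hgauss : -C₁ ≤ -C₁ * r ^ 2 / u := by
    rw [neg_mul, neg_div, neg_le_neg_iff, div_le_iff₀ hu]
    gcongr
    exact (pow_le_pow_left₀ hr (le_max_left r τ) 2).trans hu₁.le
  have hk' : c₁ * exp (-C₁) / (C₀ * √2 ^ ν * V R) ≤ k u :=
    calc c₁ * exp (-C₁) / (C₀ * √2 ^ ν * V R) = c₁ / (C₀ * √2 ^ ν * V R) * exp (-C₁) := by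
          ring
      _ ≤ c₁ / V √u * exp (-C₁ * r ^ 2 / u) := by gcongr
      _ ≤ k u := hk.lower u hu
  have he' : cs * (τ ^ α * (2 * R ^ 2) ^ (-1 - α / 2)) ≤ e u := by
    refine le_trans ?_
      (he.ge_of_sq_lt u ((pow_le_pow_left₀ hτ.le (le_max_right r τ) 2).trans_lt hu₁))
    exact mul_le_mul_of_nonneg_left (mul_le_mul_of_nonneg_left
      (rpow_le_rpow_of_nonpos hu hu₂ (by linarith)) (by positivity)) hcs
  calc c₁ * exp (-C₁) * cs * 2 ^ (-1 - α / 2) / (C₀ * √2 ^ ν) / R ^ 2 * ((τ / R) ^ α / V R)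
      = c₁ * exp (-C₁) / (C₀ * √2 ^ ν * V R) *
          (cs * (τ ^ α * (2 * R ^ 2) ^ (-1 - α / 2))) := by
        rw [rpow_mul_two_mul_sq_rpow hτ.le hR]; field_simp
    _ ≤ k u * e u := mul_le_mul hk' he' (by positivity) (hk.nonneg hV hc₁ hu)

lemma integrableOn_and_setIntegral_Ioi_sq_mul_le (hV : IsDoublingProfile C₀ ν V)
    (hk : HasGaussianBounds c₁ C₁ c₂ C₂ r V k) (he : IsStableDensity α q ca cs Cs τ e)
    (hkm : Measurable k) (hem : Measurable e) (hα : 0 < α) (hc₁ : 0 ≤ c₁) (hc₂ : 0 ≤ c₂)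
    (hC₂ : 0 ≤ C₂) (hτ : 0 < τ) :
    IntegrableOn (fun u => k u * e u) (Set.Ioi (max r τ ^ 2)) ∧
      ∫ u in Set.Ioi (max r τ ^ 2), k u * e u ≤
        C₂ * Cs * (2 / α) * ((τ / max r τ) ^ α / V (max r τ)) := by
  set R := max r τ
  have hR : 0 < R := hτ.trans_le (le_max_right _ _)
  have hmaj : IntegrableOn (fun u => C₂ * Cs * τ ^ α / V R * u ^ (-1 - α / 2))
      (Set.Ioi (R ^ 2)) :=
    (integrableOn_Ioi_rpow_of_lt (by linarith) (by positivity)).const_mul _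
  have hle : ∀ u ∈ Set.Ioi (R ^ 2), k u * e u ≤ C₂ * Cs * τ ^ α / V R * u ^ (-1 - α / 2) :=
    fun u hu => mul_le_of_sq_lt hV hk he hc₂ hC₂ hτ hu
  have hint : IntegrableOn (fun u => k u * e u) (Set.Ioi (R ^ 2)) :=
    hmaj.mono' (hkm.mul hem).aestronglyMeasurable ((ae_restrict_iff' measurableSet_Ioi).2
      (ae_of_all _ fun u hu => by
        have hu₀ : 0 < u := (pow_pos hR 2).trans hu
        rw [norm_of_nonneg (mul_nonneg (hk.nonneg hV hc₁ hu₀) (he.pos u hu₀).le)]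
        exact hle u hu))
  refine ⟨hint, ?_⟩
  calc ∫ u in Set.Ioi (R ^ 2), k u * e u
      ≤ ∫ u in Set.Ioi (R ^ 2), C₂ * Cs * τ ^ α / V R * u ^ (-1 - α / 2) :=
        setIntegral_mono_on hint hmaj measurableSet_Ioi hle
    _ = C₂ * Cs * τ ^ α / V R * (2 / α * R ^ (-α)) := by
        rw [integral_const_mul, integral_Ioi_sq_rpow hα hR]
    _ = C₂ * Cs * (2 / α) * ((τ / R) ^ α / V R) := by
        rw [div_rpow hτ.le hR.le, rpow_neg hR.le]; ring

lemma integrableOn_and_integral_mul_le (hV : IsDoublingProfile C₀ ν V)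
    (hk : HasGaussianBounds c₁ C₁ c₂ C₂ r V k) (he : IsStableDensity α q ca cs Cs τ e)
    (hkm : Measurable k) (hem : Measurable e) (hα₀ : 0 < α) (hα : α ≤ 2) (hq : 0 ≤ q)
    (hca : 0 ≤ ca) (hc₁ : 0 ≤ c₁) (hc₂ : 0 ≤ c₂) (hC₂ : 0 ≤ C₂) (hCs : 0 ≤ Cs) {K₁ K₂ K₃ : ℝ}
    (hK₁ : ∀ σ, 0 < σ → σ ^ (ν + 2 + q) * exp (-(ca * σ ^ (2 * q))) ≤ K₁)
    (hK₂ : ∀ ξ, 0 < ξ → ξ ^ (ν + 2 + q) * exp (-(c₂ * ξ ^ 2)) ≤ K₂)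
    (hK₃ : ∀ ξ, 0 < ξ → ξ ^ (ν + 2 + α) * exp (-(c₂ * ξ ^ 2)) ≤ K₃) (hτ : 0 < τ) :
    IntegrableOn (fun u => k u * e u) (Set.Ioi 0) ∧
      ∫ u in Set.Ioi 0, k u * e u ≤ (C₂ * C₀ * Cs * (max K₁ K₂ + K₃) + C₂ * Cs * (2 / α)) *
        ((τ / max r τ) ^ α / V (max r τ)) := by
  set R := max r τ
  set g := (τ / R) ^ α / V R
  have hR : 0 < R := hτ.trans_le (le_max_right _ _)
  have hg : 0 ≤ g := div_nonneg (by positivity) (hV.pos R hR).le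
  have hC₀ : 0 ≤ C₀ := zero_le_one.trans hV.one_le
  have hK₃₀ : 0 ≤ K₃ :=
    (by positivity : (0 : ℝ) ≤ 1 ^ (ν + 2 + α) * exp (-(c₂ * 1 ^ 2))).trans (hK₃ 1 one_pos)
  have hτR : τ ^ 2 ≤ R ^ 2 := pow_le_pow_left₀ hτ.le (le_max_right r τ) 2
  have hf : Measurable fun u => k u * e u := hkm.mul hem
  have hf₀ : ∀ u, 0 < u → 0 ≤ k u * e u := fun u hu =>
    mul_nonneg (hk.nonneg hV hc₁ hu) (he.pos u hu).le
  have small : IntegrableOn (fun u => k u * e u) (Set.Ioc 0 (τ ^ 2)) ∧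
      ∫ u in Set.Ioc 0 (τ ^ 2), k u * e u ≤
        C₂ * C₀ * Cs * max K₁ K₂ / τ ^ 2 * g * (τ ^ 2 - 0) :=
    integrableOn_Ioc_and_setIntegral_le (sq_nonneg τ) hf (fun u hu => hf₀ u hu.1)
      (fun u hu => mul_le_of_le_sq hV hk he hα hq hca hc₂ hC₂ hCs hK₁ hK₂ hτ hu.1 hu.2)
  have mid : IntegrableOn (fun u => k u * e u) (Set.Ioc (τ ^ 2) (R ^ 2)) ∧
      ∫ u in Set.Ioc (τ ^ 2) (R ^ 2), k u * e u ≤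
        C₂ * C₀ * Cs * K₃ / R ^ 2 * g * (R ^ 2 - τ ^ 2) :=
    integrableOn_Ioc_and_setIntegral_le hτR hf (fun u hu => hf₀ u ((pow_pos hτ 2).trans hu.1))
      (fun u hu => mul_le_of_sq_lt_of_le_sq hV hk he hC₂ hCs hK₃ hτ hu.1 hu.2)
  have large := integrableOn_and_setIntegral_Ioi_sq_mul_le hV hk he hkm hem hα₀ hc₁ hc₂ hC₂ hτ
  obtain ⟨hint, hle⟩ := integrableOn_Ioi_and_setIntegral_le_add (sq_nonneg τ) small
    (integrableOn_Ioi_and_setIntegral_le_add hτR mid large)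
  refine ⟨hint, hle.trans ?_⟩
  have hsmall : C₂ * C₀ * Cs * max K₁ K₂ / τ ^ 2 * g * (τ ^ 2 - 0) =
      C₂ * C₀ * Cs * max K₁ K₂ * g := by
    field_simp; ring
  have hmid : C₂ * C₀ * Cs * K₃ / R ^ 2 * g * (R ^ 2 - τ ^ 2) ≤ C₂ * C₀ * Cs * K₃ * g := by
    calc C₂ * C₀ * Cs * K₃ / R ^ 2 * g * (R ^ 2 - τ ^ 2)
        = C₂ * C₀ * Cs * K₃ * g * ((R ^ 2 - τ ^ 2) / R ^ 2) := by ring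
      _ ≤ C₂ * C₀ * Cs * K₃ * g * 1 := by
          gcongr; exact div_le_one_of_le₀ (by linarith [sq_nonneg τ]) (sq_nonneg R)
      _ = _ := mul_one _
  linarith

lemma le_integral_mul (hV : IsDoublingProfile C₀ ν V)
    (hk : HasGaussianBounds c₁ C₁ c₂ C₂ r V k) (he : IsStableDensity α q ca cs Cs τ e)
    (hint : IntegrableOn (fun u => k u * e u) (Set.Ioi 0)) (hα : 0 ≤ α) (hc₁ : 0 ≤ c₁)
    (hC₁ : 0 ≤ C₁) (hcs : 0 ≤ cs) (hτ : 0 < τ) (hr : 0 ≤ r) :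
    c₁ * exp (-C₁) * cs * 2 ^ (-1 - α / 2) / (C₀ * √2 ^ ν) *
      ((τ / max r τ) ^ α / V (max r τ)) ≤ ∫ u in Set.Ioi 0, k u * e u := by
  set R := max r τ
  have hR : 0 < R := hτ.trans_le (le_max_right _ _)
  have hwindow : Set.Ioc (R ^ 2) (2 * R ^ 2) ⊆ Set.Ioi 0 := fun u hu =>
    (pow_pos hR 2).trans hu.1
  calc c₁ * exp (-C₁) * cs * 2 ^ (-1 - α / 2) / (C₀ * √2 ^ ν) * ((τ / R) ^ α / V R)
      = c₁ * exp (-C₁) * cs * 2 ^ (-1 - α / 2) / (C₀ * √2 ^ ν) / R ^ 2 * ((τ / R) ^ α / V R) *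
          volume.real (Set.Ioc (R ^ 2) (2 * R ^ 2)) := by
        rw [volume_real_Ioc_of_le (by nlinarith)]; field_simp; ring
    _ ≤ ∫ u in Set.Ioc (R ^ 2) (2 * R ^ 2), k u * e u :=
        setIntegral_ge_of_const_le_real measurableSet_Ioc measure_Ioc_lt_top.ne
          (fun u hu => le_mul_of_sq_lt_of_le_two_mul_sq hV hk he hα hc₁ hC₁ hcs hτ hr hu.1 hu.2)
          (hint.mono_set hwindow)
    _ ≤ ∫ u in Set.Ioi 0, k u * e u :=
        setIntegral_mono_set hint ((ae_restrict_iff' measurableSet_Ioi).2 (ae_of_all _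
          fun u hu => mul_nonneg (hk.nonneg hV hc₁ hu) (he.pos u hu).le)) hwindow.eventuallyLE

end ScalarEstimates

lemma isStableDensity_of_bounds {α cs Cs t : ℝ} {e : ℝ → ℝ} (hα₀ : 0 < α) (hα₂ : α < 2)
    (ht : 0 < t) (hpos : ∀ u, 0 < u → 0 < e u)
    (hbd : ∀ u : ℝ, 0 < u →
      (u ≤ t ^ (2 / α) →
        cs ≤ e u / (t ^ (1 / (2 - α)) * u ^ (-((4 - α) / (4 - 2 * α))) *
          exp (-((2 - α) / 2 * (α / 2) ^ (α / (2 - α))) * t ^ (2 / (2 - α)) *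
            u ^ (-(α / (2 - α))))) ∧
        e u / (t ^ (1 / (2 - α)) * u ^ (-((4 - α) / (4 - 2 * α))) *
          exp (-((2 - α) / 2 * (α / 2) ^ (α / (2 - α))) * t ^ (2 / (2 - α)) *
            u ^ (-(α / (2 - α))))) ≤ Cs) ∧
      (t ^ (2 / α) < u →
        cs ≤ e u / (t * u ^ (-1 - α / 2)) ∧ e u / (t * u ^ (-1 - α / 2)) ≤ Cs)) :
    IsStableDensity α (α / (2 - α)) ((2 - α) / 2 * (α / 2) ^ (α / (2 - α))) cs Cs
      (t ^ (1 / α)) e := by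
  have hsq : (t ^ (1 / α)) ^ 2 = t ^ (2 / α) := by
    rw [← rpow_natCast, ← rpow_mul ht.le]; congr 1; push_cast; ring
  have hτα : (t ^ (1 / α)) ^ α = t := by
    rw [← rpow_mul ht.le, one_div_mul_cancel hα₀.ne', rpow_one]
  have hpos' : ∀ u, t ^ (2 / α) < u → 0 < u := fun u hu => (rpow_pos_of_pos ht _).trans hu
  refine ⟨hpos, fun u hu huτ => ?_, fun u hu => ?_, fun u hu => ?_⟩
  · rw [hsq] at huτ
    have h := ((hbd u hu).1 huτ).2
    rw [div_le_iff₀ (by positivity)] at h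
    refine h.trans_eq (congrArg (Cs * ·) ?_)
    have h2 : (2 : ℝ) - α ≠ 0 := by linarith
    have e₁ : α / (2 - α) / α = 1 / (2 - α) := by field_simp
    have e₂ : 2 * (α / (2 - α)) / α = 2 / (2 - α) := by field_simp
    have e₃ : u⁻¹ * u ^ (-(α / (2 - α) / 2)) = u ^ (-((4 - α) / (4 - 2 * α))) := by
      rw [← rpow_neg_one, ← rpow_add hu, show (4 : ℝ) - 2 * α = 2 * (2 - α) by ring]
      congr 1; field_simp; ring
    rw [rpow_one_div_div_sqrt_rpow ht hu, rpow_one_div_div_sqrt_rpow ht hu, e₁, e₂, ← e₃,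
      show -(2 * (α / (2 - α)) / 2) = -(α / (2 - α)) by ring]
    ring_nf
  · rw [hsq] at hu
    have h := ((hbd u (hpos' u hu)).2 hu).1
    rwa [le_div_iff₀ (by have := hpos' u hu; positivity), ← hτα] at h
  · rw [hsq] at hu
    have h := ((hbd u (hpos' u hu)).2 hu).2
    rwa [div_le_iff₀ (by have := hpos' u hu; positivity), ← hτα] at h

section MetricMeasure

variable {M : Type*} [MetricSpace M] [MeasurableSpace M] {μ : Measure M} {C₀ ν : ℝ}

lemma isDoublingProfile_ball (hVpos : ∀ (x : M) (r : ℝ), 0 < r → 0 < μ (ball x r))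
    (hVfin : ∀ (x : M) (r : ℝ), 0 < r → μ (ball x r) < ⊤)
    (hdoub : ∀ (x : M) (r R : ℝ), 0 < r → r ≤ R →
      (μ (ball x R)).toReal / (μ (ball x r)).toReal ≤ C₀ * (R / r) ^ ν) (y : M) :
    IsDoublingProfile C₀ ν (fun ρ => (μ (ball y ρ)).toReal) where
  pos ρ hρ := ENNReal.toReal_pos (hVpos y ρ hρ).ne' (hVfin y ρ hρ).ne
  mono _ R hρ hρR := ENNReal.toReal_mono (hVfin y R (hρ.trans_le hρR)).ne
    (measure_mono (ball_subset_ball hρR))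
  le_mul_rpow ρ R hρ hρR :=
    (div_le_iff₀ (ENNReal.toReal_pos (hVpos y ρ hρ).ne' (hVfin y ρ hρ).ne)).1
      (hdoub y ρ R hρ hρR)

lemma toReal_measure_ball_le_of_dist_le
    (hV : ∀ y : M, IsDoublingProfile C₀ ν (fun ρ => (μ (ball y ρ)).toReal))
    (hcomp : ∀ (x y : M) (r : ℝ), 0 < r →
      (μ (ball x r)).toReal ≤ C₀ * (1 + dist x y / r) ^ ν * (μ (ball y r)).toReal)
    (hν : 0 ≤ ν) {y z : M} {ρ R : ℝ} (hR : 0 < R) (hRρ : R ≤ 2 * ρ) (hzy : dist z y ≤ ρ) :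
    (μ (ball z R)).toReal ≤ C₀ * 2 ^ ν * (C₀ * 2 ^ ν) * (μ (ball y ρ)).toReal := by
  have hρ : 0 < ρ := by linarith
  have hC₀ : 0 ≤ C₀ := zero_le_one.trans (hV y).one_le
  calc (μ (ball z R)).toReal ≤ (μ (ball z (2 * ρ))).toReal := (hV z).mono R _ hR hRρ
    _ ≤ C₀ * (2 * ρ / ρ) ^ ν * (μ (ball z ρ)).toReal :=
        (hV z).le_mul_rpow ρ _ hρ (by linarith)
    _ = C₀ * 2 ^ ν * (μ (ball z ρ)).toReal := by rw [mul_div_cancel_right₀ _ hρ.ne']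
    _ ≤ C₀ * 2 ^ ν * (C₀ * (1 + dist z y / ρ) ^ ν * (μ (ball y ρ)).toReal) := by
        gcongr; exact hcomp z y ρ hρ
    _ ≤ C₀ * 2 ^ ν * (C₀ * 2 ^ ν * (μ (ball y ρ)).toReal) := by
        gcongr
        linarith [(div_le_one hρ).2 hzy]
    _ = _ := by ring

variable (μ) in
noncomputable def stableScale (α t : ℝ) (x y : M) : ℝ :=
  (t ^ (1 / α) / max (dist x y) (t ^ (1 / α))) ^ α /
    (μ (ball y (max (dist x y) (t ^ (1 / α))))).toReal

lemma stableScale_pos (hV : ∀ y : M, IsDoublingProfile C₀ ν (fun ρ => (μ (ball y ρ)).toReal))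
    {α t : ℝ} (ht : 0 < t) (x y : M) : 0 < stableScale μ α t x y := by
  have hτ : 0 < t ^ (1 / α) := rpow_pos_of_pos ht _
  have hR : 0 < max (dist x y) (t ^ (1 / α)) := hτ.trans_le (le_max_right _ _)
  exact div_pos (rpow_pos_of_pos (div_pos hτ hR) _) ((hV y).pos _ hR)

lemma stableScale_le_of_dist_le
    (hV : ∀ y : M, IsDoublingProfile C₀ ν (fun ρ => (μ (ball y ρ)).toReal))
    (hcomp : ∀ (x y : M) (r : ℝ), 0 < r →
      (μ (ball x r)).toReal ≤ C₀ * (1 + dist x y / r) ^ ν * (μ (ball y r)).toReal)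
    (hν : 0 ≤ ν) {α t : ℝ} (hα : 0 ≤ α) (ht : 0 < t) {x y z : M}
    (hyz : dist y z ≤ t ^ (1 / α)) :
    stableScale μ α t x y ≤ 2 ^ α * (C₀ * 2 ^ ν * (C₀ * 2 ^ ν)) * stableScale μ α t x z := by
  unfold stableScale
  set τ := t ^ (1 / α)
  set Ry := max (dist x y) τ
  set Rz := max (dist x z) τ
  have hτ : 0 < τ := rpow_pos_of_pos ht _
  have hRy : 0 < Ry := hτ.trans_le (le_max_right _ _)
  have hRz : 0 < Rz := hτ.trans_le (le_max_right _ _)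
  have hxyR : dist x y ≤ Ry := le_max_left _ _
  have hτR : τ ≤ Ry := le_max_right _ _
  have hRzy : Rz ≤ 2 * Ry := max_le (by linarith [dist_triangle x y z]) (by linarith)
  have hvol := toReal_measure_ball_le_of_dist_le hV hcomp hν hRz hRzy
    ((dist_comm z y).trans_le (hyz.trans hτR))
  have hVy := (hV y).pos Ry hRy
  have hVz := (hV z).pos Rz hRz
  have hC₀ : 0 < C₀ := zero_lt_one.trans_le (hV y).one_le
  calc (τ / Ry) ^ α / (μ (ball y Ry)).toReal
      ≤ (2 * (τ / Rz)) ^ α / ((μ (ball z Rz)).toReal / (C₀ * 2 ^ ν * (C₀ * 2 ^ ν))) := by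
        gcongr
        · rw [mul_div_assoc', le_div_iff₀ hRz, div_mul_eq_mul_div, div_le_iff₀ hRy]; nlinarith
        · rw [div_le_iff₀ (by positivity)]; linarith
    _ = 2 ^ α * (C₀ * 2 ^ ν * (C₀ * 2 ^ ν)) * ((τ / Rz) ^ α / (μ (ball z Rz)).toReal) := by
        rw [mul_rpow zero_le_two (by positivity)]; field_simp

lemma exists_Pker_two_sided_bound
    (hV : ∀ y : M, IsDoublingProfile C₀ ν (fun ρ => (μ (ball y ρ)).toReal))
    (hC₀ : 0 < C₀) (hν : 0 ≤ ν) {h : ℝ → M → M → ℝ} {c₁ C₁ c₂ C₂ : ℝ}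
    (hk : ∀ x y : M, HasGaussianBounds c₁ C₁ c₂ C₂ (dist x y) (fun ρ => (μ (ball y ρ)).toReal)
      (fun u => h u x y))
    (hhmeas : Measurable (fun p : ℝ × M × M => h p.1 p.2.1 p.2.2))
    (hc₁ : 0 < c₁) (hC₁ : 0 ≤ C₁) (hc₂ : 0 < c₂) (hC₂ : 0 < C₂) {α q ca cs Cs : ℝ}
    {η : ℝ → ℝ → ℝ} (he : ∀ t, 0 < t → IsStableDensity α q ca cs Cs (t ^ (1 / α)) (η t))
    (hηmeas : Measurable (fun p : ℝ × ℝ => η p.1 p.2))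
    (hα₀ : 0 < α) (hα₂ : α ≤ 2) (hq : 0 < q) (hca : 0 < ca) (hcs : 0 < cs) (hCs : 0 < Cs) :
    ∃ a A : ℝ, 0 < a ∧ 0 < A ∧ ∀ t, 0 < t → ∀ x y : M,
      a * stableScale μ α t x y ≤ Pker h η t x y ∧ Pker h η t x y ≤ A * stableScale μ α t x y := by
  obtain ⟨K₁, hK₁₀, hK₁⟩ :=
    exists_rpow_mul_exp_neg_le (p := ν + 2 + q) (β := 2 * q) (by positivity) (by positivity) hca
  obtain ⟨K₂, hK₂₀, hK₂⟩ :=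
    exists_rpow_mul_exp_neg_le (p := ν + 2 + q) (β := 2) (by positivity) two_pos hc₂
  obtain ⟨K₃, hK₃₀, hK₃⟩ :=
    exists_rpow_mul_exp_neg_le (p := ν + 2 + α) (β := 2) (by positivity) two_pos hc₂
  simp only [rpow_two] at hK₂ hK₃
  refine ⟨c₁ * exp (-C₁) * cs * 2 ^ (-1 - α / 2) / (C₀ * √2 ^ ν),
    C₂ * C₀ * Cs * (max K₁ K₂ + K₃) + C₂ * Cs * (2 / α), by positivity, by positivity,
    fun t ht x y => ?_⟩
  have hτ : 0 < t ^ (1 / α) := rpow_pos_of_pos ht _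
  obtain ⟨hint, hle⟩ := integrableOn_and_integral_mul_le (hV y) (hk x y) (he t ht)
    (hhmeas.comp (measurable_id.prodMk (measurable_const (a := (x, y)))))
    (hηmeas.comp (measurable_const.prodMk measurable_id)) hα₀ hα₂ hq.le hca.le hc₁.le hc₂.le
    hC₂.le hCs.le hK₁ hK₂ hK₃ hτ
  exact ⟨le_integral_mul (hV y) (hk x y) (he t ht) hint hα₀.le hc₁.le hC₁ hcs.le hτ dist_nonneg,
    hle⟩

end MetricMeasure

theorem stmt_11_general
    {M : Type*} [MetricSpace M] [MeasurableSpace M]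
    (μ : Measure M)
    (hVpos : ∀ (x : M) (r : ℝ), 0 < r → 0 < μ (ball x r))
    (hVfin : ∀ (x : M) (r : ℝ), 0 < r → μ (ball x r) < ⊤)
    -- volume comparability
    (ν ν' c₀ C₀ : ℝ) (hν' : 0 < ν') (hνν : ν' ≤ ν) (hc₀ : 0 < c₀) (hc₀C₀ : c₀ ≤ C₀)
    (hdoub : ∀ (x : M) (r R : ℝ), 0 < r → r ≤ R →
        c₀ * (R/r) ^ ν' ≤ (μ (ball x R)).toReal / (μ (ball x r)).toReal ∧
        (μ (ball x R)).toReal / (μ (ball x r)).toReal ≤ C₀ * (R/r) ^ ν)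
    (hcomp : ∀ (x y : M) (r : ℝ), 0 < r →
        (μ (ball x r)).toReal ≤ C₀ * (1 + dist x y / r) ^ ν * (μ (ball y r)).toReal)
    -- heat kernel with Li–Yau two-sided Gaussian estimate
    (h : ℝ → M → M → ℝ)
    (hhmeas : Measurable (fun p : ℝ × M × M => h p.1 p.2.1 p.2.2))
    (c₁ C₁ c₂ C₂ : ℝ) (hc₁ : 0 < c₁) (hC₁ : 0 < C₁) (hc₂ : 0 < c₂) (hC₂ : 0 < C₂)
    (hLY : ∀ u : ℝ, 0 < u → ∀ x y : M,
        c₁ / (μ (ball y (Real.sqrt u))).toReal * Real.exp (-C₁ * (dist x y)^2 / u) ≤ h u x y ∧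
        h u x y ≤ C₂ / (μ (ball y (Real.sqrt u))).toReal * Real.exp (-c₂ * (dist x y)^2 / u))
    -- stable subordinator densities with two-sided bounds
    (α : ℝ) (hα0 : 0 < α) (hα2 : α < 2)
    (η : ℝ → ℝ → ℝ)
    (hηmeas : Measurable (fun p : ℝ × ℝ => η p.1 p.2))
    (hηpos : ∀ t : ℝ, 0 < t → ∀ u : ℝ, 0 < u → 0 < η t u)
    (cs Cs : ℝ) (hcs : 0 < cs) (hcsCs : cs ≤ Cs)
    (hηbd : ∀ t : ℝ, 0 < t → ∀ u : ℝ, 0 < u →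
        (u ≤ t ^ (2/α) →
          cs ≤ η t u / (t ^ (1/(2-α)) * u ^ (-((4-α)/(4-2*α))) *
              Real.exp (-(((2-α)/2) * (α/2) ^ (α/(2-α))) * t ^ (2/(2-α)) * u ^ (-(α/(2-α))))) ∧
          η t u / (t ^ (1/(2-α)) * u ^ (-((4-α)/(4-2*α))) *
              Real.exp (-(((2-α)/2) * (α/2) ^ (α/(2-α))) * t ^ (2/(2-α)) * u ^ (-(α/(2-α))))) ≤ Cs) ∧
        (t ^ (2/α) < u →
          cs ≤ η t u / (t * u ^ (-1-α/2)) ∧ η t u / (t * u ^ (-1-α/2)) ≤ Cs)) :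
    ∃ C : ℝ, 1 ≤ C ∧ ∀ t : ℝ, 0 < t → ∀ x y z : M, dist y z ≤ t ^ (1/α) →
      C⁻¹ ≤ Pker h η t x y / Pker h η t x z ∧
      Pker h η t x y / Pker h η t x z ≤ C := by
  have hC₀ : 0 < C₀ := hc₀.trans_le hc₀C₀
  have hν : 0 ≤ ν := hν'.le.trans hνν
  have hV := isDoublingProfile_ball hVpos hVfin (fun x r R hr hrR => (hdoub x r R hr hrR).2)
  obtain ⟨a, A, ha, hA, hP⟩ := exists_Pker_two_sided_bound hV hC₀ hν
    (fun x y => ⟨fun u hu => (hLY u hu x y).1, fun u hu => (hLY u hu x y).2⟩) hhmeas hc₁ hC₁.le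
    hc₂ hC₂ (fun t ht => isStableDensity_of_bounds hα0 hα2 ht (hηpos t ht) (hηbd t ht)) hηmeas
    hα0 hα2.le (div_pos hα0 (by linarith))
    (mul_pos (div_pos (by linarith) two_pos) (rpow_pos_of_pos (half_pos hα0) _)) hcs
    (hcs.trans_le hcsCs)
  set D := 2 ^ α * (C₀ * 2 ^ ν * (C₀ * 2 ^ ν))
  refine ⟨max 1 (A * D / a), le_max_left _ _, fun t ht x y z hyz => ?_⟩
  obtain ⟨hlow, hup⟩ := inv_le_div_and_div_le ha hA.le (by positivity)
    (stableScale_pos hV ht x y) (stableScale_pos hV ht x z) (hP t ht x y) (hP t ht x z)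
    (stableScale_le_of_dist_le hV hcomp hν hα0.le ht hyz)
    (stableScale_le_of_dist_le hV hcomp hν hα0.le ht (dist_comm z y ▸ hyz))
  exact ⟨(inv_anti₀ (by positivity) (le_max_right _ _)).trans hlow, hup.trans (le_max_right _ _)⟩

/-- comparability of the fractional heat kernel at nearby base points:
if `d(y,z) ≤ t^{1/α}` then `C⁻¹ ≤ P_t^α(x,y)/P_t^α(x,z) ≤ C`. -/
theorem stmt_11
    {M : Type*} [MetricSpace M] [MeasurableSpace M] [BorelSpace M]
    (μ : Measure M)
    (hVpos : ∀ (x : M) (r : ℝ), 0 < r → 0 < μ (ball x r))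
    (hVfin : ∀ (x : M) (r : ℝ), 0 < r → μ (ball x r) < ⊤)
    -- volume comparability
    (ν ν' c₀ C₀ : ℝ) (hν' : 0 < ν') (hνν : ν' ≤ ν) (hc₀ : 0 < c₀) (hc₀C₀ : c₀ ≤ C₀)
    (hdoub : ∀ (x : M) (r R : ℝ), 0 < r → r ≤ R →
        c₀ * (R/r) ^ ν' ≤ (μ (ball x R)).toReal / (μ (ball x r)).toReal ∧
        (μ (ball x R)).toReal / (μ (ball x r)).toReal ≤ C₀ * (R/r) ^ ν)
    (hcomp : ∀ (x y : M) (r : ℝ), 0 < r →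
        (μ (ball x r)).toReal ≤ C₀ * (1 + dist x y / r) ^ ν * (μ (ball y r)).toReal)
    -- heat kernel with Li–Yau two-sided Gaussian estimate
    (h : ℝ → M → M → ℝ)
    (hhmeas : Measurable (fun p : ℝ × M × M => h p.1 p.2.1 p.2.2))
    (hhsym : ∀ u : ℝ, 0 < u → ∀ x y : M, h u x y = h u y x)
    (c₁ C₁ c₂ C₂ : ℝ) (hc₁ : 0 < c₁) (hC₁ : 0 < C₁) (hc₂ : 0 < c₂) (hC₂ : 0 < C₂)
    (hLY : ∀ u : ℝ, 0 < u → ∀ x y : M,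
        c₁ / (μ (ball y (Real.sqrt u))).toReal * Real.exp (-C₁ * (dist x y)^2 / u) ≤ h u x y ∧
        h u x y ≤ C₂ / (μ (ball y (Real.sqrt u))).toReal * Real.exp (-c₂ * (dist x y)^2 / u))
    -- stable subordinator densities with two-sided bounds
    (α : ℝ) (hα0 : 0 < α) (hα2 : α < 2)
    (η : ℝ → ℝ → ℝ)
    (hηmeas : Measurable (fun p : ℝ × ℝ => η p.1 p.2))
    (hηpos : ∀ t : ℝ, 0 < t → ∀ u : ℝ, 0 < u → 0 < η t u)
    (cs Cs : ℝ) (hcs : 0 < cs) (hcsCs : cs ≤ Cs)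
    (hηbd : ∀ t : ℝ, 0 < t → ∀ u : ℝ, 0 < u →
        (u ≤ t ^ (2/α) →
          cs ≤ η t u / (t ^ (1/(2-α)) * u ^ (-((4-α)/(4-2*α))) *
              Real.exp (-(((2-α)/2) * (α/2) ^ (α/(2-α))) * t ^ (2/(2-α)) * u ^ (-(α/(2-α))))) ∧
          η t u / (t ^ (1/(2-α)) * u ^ (-((4-α)/(4-2*α))) *
              Real.exp (-(((2-α)/2) * (α/2) ^ (α/(2-α))) * t ^ (2/(2-α)) * u ^ (-(α/(2-α))))) ≤ Cs) ∧
        (t ^ (2/α) < u →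
          cs ≤ η t u / (t * u ^ (-1-α/2)) ∧ η t u / (t * u ^ (-1-α/2)) ≤ Cs)) :
    ∃ C : ℝ, 1 ≤ C ∧ ∀ t : ℝ, 0 < t → ∀ x y z : M, dist y z ≤ t ^ (1/α) →
      C⁻¹ ≤ Pker h η t x y / Pker h η t x z ∧
      Pker h η t x y / Pker h η t x z ≤ C :=
  stmt_11_general μ hVpos hVfin ν ν' c₀ C₀ hν' hνν hc₀ hc₀C₀ hdoub hcomp h hhmeas c₁ C₁ c₂ C₂ hc₁
    hC₁ hc₂ hC₂ hLY α hα0 hα2 η hηmeas hηpos cs Cs hcs hcsCs hηbd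
end

section
/- For every ρ > 0 and every ε ∈ (0,2) there exist constants C > 0 and t₀ > 0 such that for all t ≥ t₀: ∫ over r ∈ (0, t^{2−ε}) ∪ (t^{2+ε}, ∞) of t (1+r) (t² + r²)^{−5/4} exp( −ρ( √(t² + r²) − r ) ) dr ≤ C t^{−ε/2}. -/
open MeasureTheory Metric Real Filter

/-!
Split the range of integration at `t^(2-ε)` and `t^(2+ε)`. For `r ≥ t^(2+ε)` the exponential
factor is at most `1` and the integrand is at most `2 t r^(-3/2)`, whose tail integral is
`4 t (t^(2+ε))^(-1/2) = 4 t^(-ε/2)`. For `r ≤ t^(2-ε)`, rationalising gives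
`√(t²+r²) - r = t² / (√(t²+r²) + r) ≥ t² / (t + 2r) ≥ t^m / 3` with `m = min ε 1`, so this part
is a power of `t` times `exp (-ρ t^m / 3)`, which eventually drops below `t^(-ε/2)`.
-/

open Set Topology

noncomputable section

def radialPoissonIntegrand (ρ t r : ℝ) : ℝ :=
  t * (1 + r) * (t ^ 2 + r ^ 2) ^ (-(5/4 : ℝ)) * exp (-ρ * (√(t ^ 2 + r ^ 2) - r))

variable {ρ t r : ℝ}

theorem continuous_radialPoissonIntegrand (ρ : ℝ) (ht : t ≠ 0) :
    Continuous (radialPoissonIntegrand ρ t) := by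
  have hpow : Continuous fun r : ℝ => (t ^ 2 + r ^ 2) ^ (-(5/4 : ℝ)) :=
    (continuous_const.add (continuous_pow 2)).rpow_const fun r =>
      Or.inl (add_pos_of_pos_of_nonneg (sq_pos_of_ne_zero ht) (sq_nonneg r)).ne'
  unfold radialPoissonIntegrand
  fun_prop

theorem radialPoissonIntegrand_nonneg (ρ : ℝ) (ht : 0 ≤ t) (hr : 0 ≤ r) :
    0 ≤ radialPoissonIntegrand ρ t r := by
  unfold radialPoissonIntegrand
  positivity

theorem sq_div_le_sqrt_sq_add_sq_sub (ht : 0 < t) (hr : 0 ≤ r) :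
    t ^ 2 / (t + 2 * r) ≤ √(t ^ 2 + r ^ 2) - r := by
  have hsq : √(t ^ 2 + r ^ 2) ^ 2 = t ^ 2 + r ^ 2 := sq_sqrt (by positivity)
  have hr_le : r ≤ √(t ^ 2 + r ^ 2) := le_sqrt_of_sq_le (by nlinarith)
  have hle_add : √(t ^ 2 + r ^ 2) ≤ t + r := sqrt_le_iff.2 ⟨by linarith, by nlinarith⟩
  rw [div_le_iff₀ (by positivity)]
  nlinarith [mul_le_mul_of_nonneg_left (by linarith : √(t ^ 2 + r ^ 2) + r ≤ t + 2 * r)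
    (sub_nonneg.2 hr_le)]

theorem radialPoissonIntegrand_le_of_le {c : ℝ} (hρ : 0 ≤ ρ) (ht : 0 < t) (hr : 0 ≤ r)
    (hrc : r ≤ c) (htc : t ≤ c) :
    radialPoissonIntegrand ρ t r ≤
      t * (1 + c) * t ^ (-(5/2 : ℝ)) * exp (-ρ * (t ^ 2 / (3 * c))) := by
  have hpow : (t ^ 2 + r ^ 2) ^ (-(5/4 : ℝ)) ≤ t ^ (-(5/2 : ℝ)) := by
    rw [show t ^ (-(5/2 : ℝ)) = (t ^ 2) ^ (-(5/4 : ℝ)) by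
      rw [← rpow_natCast, ← rpow_mul ht.le]; norm_num]
    exact rpow_le_rpow_of_nonpos (by positivity) (by nlinarith) (by norm_num)
  have hgap : t ^ 2 / (3 * c) ≤ √(t ^ 2 + r ^ 2) - r :=
    (div_le_div_of_nonneg_left (by positivity) (by positivity) (by linarith)).trans
      (sq_div_le_sqrt_sq_add_sq_sub ht hr)
  have hc : 0 ≤ c := by linarith
  unfold radialPoissonIntegrand
  simp only [neg_mul]
  gcongr

theorem radialPoissonIntegrand_le_rpow (hρ : 0 ≤ ρ) (ht : 0 ≤ t) (hr : 1 ≤ r) :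
    radialPoissonIntegrand ρ t r ≤ 2 * t * r ^ (-(3/2 : ℝ)) := by
  have hr0 : 0 < r := by linarith
  have hpow : (t ^ 2 + r ^ 2) ^ (-(5/4 : ℝ)) ≤ r ^ (-(5/2 : ℝ)) := by
    rw [show r ^ (-(5/2 : ℝ)) = (r ^ 2) ^ (-(5/4 : ℝ)) by
      rw [← rpow_natCast, ← rpow_mul hr0.le]; norm_num]
    exact rpow_le_rpow_of_nonpos (by positivity) (by nlinarith) (by norm_num)
  have hexp : exp (-ρ * (√(t ^ 2 + r ^ 2) - r)) ≤ 1 := by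
    have : r ≤ √(t ^ 2 + r ^ 2) := le_sqrt_of_sq_le (by nlinarith)
    exact exp_le_one_iff.2 (by nlinarith)
  calc radialPoissonIntegrand ρ t r ≤ t * (2 * r) * r ^ (-(5/2 : ℝ)) * 1 := by
        unfold radialPoissonIntegrand
        gcongr
        linarith
    _ = 2 * t * r ^ (-(3/2 : ℝ)) := by
        rw [show (-(3/2) : ℝ) = 1 + -(5/2) by norm_num, rpow_add hr0, rpow_one]
        ring

theorem integrableOn_Ioi_radialPoissonIntegrand {b : ℝ} (hρ : 0 ≤ ρ) (ht : 0 < t) (hb : 1 ≤ b) :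
    IntegrableOn (radialPoissonIntegrand ρ t) (Ioi b) := by
  refine Integrable.mono' ((integrableOn_Ioi_rpow_of_lt (a := -(3/2)) (by norm_num) (by linarith)).const_mul
    (2 * t)) (continuous_radialPoissonIntegrand ρ ht.ne').aestronglyMeasurable ?_
  filter_upwards [ae_restrict_mem measurableSet_Ioi] with r (hr : b < r)
  rw [norm_of_nonneg (radialPoissonIntegrand_nonneg ρ ht.le (by linarith))]
  exact radialPoissonIntegrand_le_rpow hρ ht.le (by linarith)

theorem setIntegral_Ioi_radialPoissonIntegrand_le {b : ℝ} (hρ : 0 ≤ ρ) (ht : 0 < t)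
    (hb : 1 ≤ b) :
    ∫ r in Ioi b, radialPoissonIntegrand ρ t r ≤ 4 * t * b ^ (-(1/2 : ℝ)) :=
  calc ∫ r in Ioi b, radialPoissonIntegrand ρ t r ≤ ∫ r in Ioi b, 2 * t * r ^ (-(3/2 : ℝ)) :=
        setIntegral_mono_on (integrableOn_Ioi_radialPoissonIntegrand hρ ht hb)
          ((integrableOn_Ioi_rpow_of_lt (a := -(3/2)) (by norm_num) (by linarith)).const_mul (2 * t))
          measurableSet_Ioi fun r hr => radialPoissonIntegrand_le_rpow hρ ht.le (hb.trans hr.le)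
    _ = 4 * t * b ^ (-(1/2 : ℝ)) := by
        rw [integral_const_mul, integral_Ioi_rpow_of_lt (by norm_num) (by linarith)]
        norm_num
        ring

theorem setIntegral_Ioo_radialPoissonIntegrand_le {a c : ℝ} (hρ : 0 ≤ ρ) (ht : 0 < t)
    (ha : 0 ≤ a) (hac : a ≤ c) (htc : t ≤ c) :
    ∫ r in Ioo 0 a, radialPoissonIntegrand ρ t r ≤
      a * (t * (1 + c) * t ^ (-(5/2 : ℝ)) * exp (-ρ * (t ^ 2 / (3 * c)))) :=
  calc ∫ r in Ioo 0 a, radialPoissonIntegrand ρ t r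
      ≤ ∫ _ in Ioo 0 a, t * (1 + c) * t ^ (-(5/2 : ℝ)) * exp (-ρ * (t ^ 2 / (3 * c))) :=
        setIntegral_mono_on
          (((continuous_radialPoissonIntegrand ρ ht.ne').integrableOn_Icc).mono_set
            Ioo_subset_Icc_self)
          (integrableOn_const measure_Ioo_lt_top.ne) measurableSet_Ioo
          fun r hr => radialPoissonIntegrand_le_of_le hρ ht hr.1.le (hr.2.le.trans hac) htc
    _ = _ := by rw [setIntegral_const, volume_real_Ioo_of_le ha, sub_zero, smul_eq_mul]

theorem setIntegral_Ioo_rpow_radialPoissonIntegrand_le {ε m : ℝ} (hρ : 0 ≤ ρ) (ht : 1 ≤ t)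
    (hm : m ≤ 1) (hmε : m ≤ ε) :
    ∫ r in Ioo 0 (t ^ (2 - ε)), radialPoissonIntegrand ρ t r ≤
      2 * (t ^ (5/2 - ε - m) * exp (-(ρ / 3) * t ^ m)) := by
  have ht0 : 0 < t := by linarith
  have hc : 1 ≤ t ^ (2 - m) := one_le_rpow ht (by linarith)
  have hgap : t ^ 2 / (3 * t ^ (2 - m)) = t ^ m / 3 := by
    rw [← rpow_natCast, show ((2 : ℕ) : ℝ) = m + (2 - m) by push_cast; ring, rpow_add ht0]
    field_simp
  calc ∫ r in Ioo 0 (t ^ (2 - ε)), radialPoissonIntegrand ρ t r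
      ≤ t ^ (2 - ε) * (t * (1 + t ^ (2 - m)) * t ^ (-(5/2 : ℝ)) *
          exp (-ρ * (t ^ 2 / (3 * t ^ (2 - m))))) :=
        setIntegral_Ioo_radialPoissonIntegrand_le hρ ht0 (by positivity)
          (rpow_le_rpow_of_exponent_le ht (by linarith))
          (by simpa using rpow_le_rpow_of_exponent_le ht (by linarith : (1 : ℝ) ≤ 2 - m))
    _ ≤ t ^ (2 - ε) * (t * (2 * t ^ (2 - m)) * t ^ (-(5/2 : ℝ)) *
          exp (-ρ * (t ^ 2 / (3 * t ^ (2 - m))))) := by gcongr; linarith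
    _ = 2 * (t ^ (5/2 - ε - m) * exp (-(ρ / 3) * t ^ m)) := by
        rw [hgap, show (5/2 - ε - m : ℝ) = (2 - ε) + 1 + (2 - m) + -(5/2) by ring,
          rpow_add ht0, rpow_add ht0, rpow_add ht0, rpow_one]
        ring_nf

theorem setIntegral_Ioi_rpow_radialPoissonIntegrand_le {ε : ℝ} (hρ : 0 ≤ ρ) (ht : 1 ≤ t)
    (hε : 0 ≤ ε) :
    ∫ r in Ioi (t ^ (2 + ε)), radialPoissonIntegrand ρ t r ≤ 4 * t ^ (-(ε / 2)) := by
  have ht0 : 0 < t := by linarith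
  calc ∫ r in Ioi (t ^ (2 + ε)), radialPoissonIntegrand ρ t r
      ≤ 4 * t * (t ^ (2 + ε)) ^ (-(1/2 : ℝ)) :=
        setIntegral_Ioi_radialPoissonIntegrand_le hρ ht0 (one_le_rpow ht (by linarith))
    _ = 4 * t ^ (-(ε / 2)) := by
        rw [← rpow_mul ht0.le, mul_assoc, show -(ε / 2) = 1 + (2 + ε) * -(1/2) by ring,
          rpow_add ht0, rpow_one]

theorem eventually_mul_rpow_mul_exp_neg_le_rpow (K p q : ℝ) {c m : ℝ} (hc : 0 < c)
    (hm : 0 < m) :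
    ∀ᶠ t in atTop, K * (t ^ p * exp (-c * t ^ m)) ≤ t ^ q := by
  have hlim : Tendsto (fun t : ℝ => K * (t ^ (p - q) * exp (-c * t ^ m))) atTop (𝓝 0) := by
    have := ((tendsto_rpow_mul_exp_neg_mul_atTop_nhds_zero ((p - q) / m) c hc).comp
      (tendsto_rpow_atTop hm)).const_mul K
    rw [mul_zero] at this
    refine this.congr' ?_
    filter_upwards [eventually_gt_atTop 0] with t ht
    simp only [Function.comp, ← rpow_mul ht.le, mul_div_cancel₀ _ hm.ne']
  filter_upwards [hlim.eventually_le_const one_pos, eventually_gt_atTop 0] with t hle ht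
  calc K * (t ^ p * exp (-c * t ^ m)) = K * (t ^ (p - q) * exp (-c * t ^ m)) * t ^ q := by
        rw [rpow_sub ht]
        field_simp
    _ ≤ 1 * t ^ q := by gcongr
    _ = t ^ q := one_mul _

end

/-- the radial integral estimate behind the determination of the critical region
of the Poisson kernel on a rank one non-compact symmetric space: the integral of
`t (1+r)(t²+r²)^{-5/4} e^{-ρ(√(t²+r²)-r)}` over `(0, t^{2-ε}) ∪ (t^{2+ε}, ∞)`
is `O(t^{-ε/2})`. -/
theorem stmt_15 :
    ∀ ρ : ℝ, 0 < ρ → ∀ ε : ℝ, 0 < ε → ε < 2 →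
      ∃ C t₀ : ℝ, 0 < C ∧ 0 < t₀ ∧ ∀ t : ℝ, t₀ ≤ t →
        (∫ r in Set.Ioo (0:ℝ) (t ^ (2-ε)) ∪ Set.Ioi (t ^ (2+ε)),
            t * (1+r) * (t^2 + r^2) ^ (-(5/4 : ℝ)) *
              Real.exp (-ρ * (Real.sqrt (t^2 + r^2) - r)))
          ≤ C * t ^ (-(ε/2)) := by
  intro ρ hρ ε hε hε2
  set m := min ε 1
  obtain ⟨t₁, hnear⟩ := (eventually_mul_rpow_mul_exp_neg_le_rpow 2 (5/2 - ε - m) (-(ε / 2))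
    (by positivity : 0 < ρ / 3) (lt_min hε one_pos)).exists_forall_of_atTop
  refine ⟨5, max t₁ 1, by norm_num, by positivity, fun t ht => ?_⟩
  have ht1 : 1 ≤ t := (le_max_right _ _).trans ht
  have hdisj : Disjoint (Ioo 0 (t ^ (2 - ε))) (Ioi (t ^ (2 + ε))) :=
    (Ioc_disjoint_Ioi (rpow_le_rpow_of_exponent_le ht1 (by linarith))).mono_left
      Ioo_subset_Ioc_self
  change ∫ r in Ioo 0 (t ^ (2 - ε)) ∪ Ioi (t ^ (2 + ε)), radialPoissonIntegrand ρ t r ≤ _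
  rw [setIntegral_union hdisj measurableSet_Ioi
    (((continuous_radialPoissonIntegrand ρ (by positivity)).integrableOn_Icc).mono_set
      Ioo_subset_Icc_self)
    (integrableOn_Ioi_radialPoissonIntegrand hρ.le (by positivity)
      (one_le_rpow ht1 (by linarith)))]
  calc _ ≤ 2 * (t ^ (5/2 - ε - m) * exp (-(ρ / 3) * t ^ m)) + 4 * t ^ (-(ε / 2)) :=
        add_le_add (setIntegral_Ioo_rpow_radialPoissonIntegrand_le hρ.le ht1 (min_le_right _ _)
          (min_le_left _ _)) (setIntegral_Ioi_rpow_radialPoissonIntegrand_le hρ.le ht1 hε.le)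
    _ ≤ t ^ (-(ε / 2)) + 4 * t ^ (-(ε / 2)) := by
        gcongr
        exact hnear t ((le_max_left _ _).trans ht)
    _ = 5 * t ^ (-(ε / 2)) := by ring
end

section
/- Fix α ∈ (0,2) and a base point x₀ ∈ M, and assume sup_{y ∈ M} d(x₀,y) = ∞. Let φ : (0,∞) → (0,∞) be decreasing with φ(t) → 0 as t → +∞. Then there exist ε ∈ (0,1), a sequence of nonnegative weights (m_k)_{k≥1} with Σ_k m_k = ε, points x_k ∈ M, times t_k → +∞ and a constant c₁ > 0 such that the function w(t,x) = (1 − ε) P_t(x,x₀) + Σ_{k≥1} m_k P_t(x,x_k) (a solution with total mass 1) satisfies, for every k ≥ 1, | w(t_k, x₀) − P_{t_k}(x₀,x₀) | · V(x₀, t_k^{1/α}) ≥ c₁ k φ(t_k). In particular, no uniform rate of convergence to the fundamental solution is possible for general L¹ initial data. -/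
open MeasureTheory Metric Real Filter

set_option maxHeartbeats 1000000 in
/-- any prescribed rate of convergence can be beaten: for any decreasing
`φ(t) → 0` there are initial data (a convex combination of Dirac masses, of total mass 1)
whose solution `w` satisfies `|w(t_k,x₀) − P_{t_k}(x₀,x₀)| · V(x₀,t_k^{1/α}) ≥ c₁ k φ(t_k)`
along a sequence `t_k → ∞`. -/
theorem stmt_19
    {M : Type*} [MetricSpace M] [MeasurableSpace M] [BorelSpace M]
    (μ : Measure M)
    (hVpos : ∀ (x : M) (r : ℝ), 0 < r → 0 < μ (ball x r))
    (hVfin : ∀ (x : M) (r : ℝ), 0 < r → μ (ball x r) < ⊤)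
    -- volume comparability
    (ν ν' c₀ C₀ : ℝ) (hν' : 0 < ν') (hνν : ν' ≤ ν) (hc₀ : 0 < c₀) (hc₀C₀ : c₀ ≤ C₀)
    (hdoub : ∀ (x : M) (r R : ℝ), 0 < r → r ≤ R →
        c₀ * (R/r) ^ ν' ≤ (μ (ball x R)).toReal / (μ (ball x r)).toReal ∧
        (μ (ball x R)).toReal / (μ (ball x r)).toReal ≤ C₀ * (R/r) ^ ν)
    (hcomp : ∀ (x y : M) (r : ℝ), 0 < r →
        (μ (ball x r)).toReal ≤ C₀ * (1 + dist x y / r) ^ ν * (μ (ball y r)).toReal)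
    (α : ℝ) (hα0 : 0 < α) (hα2 : α < 2)
    -- the kernels, with the two-sided bound of the fractional heat kernel
    (P : ℝ → M → M → ℝ)
    (hPpos : ∀ t : ℝ, 0 < t → ∀ x y : M, 0 < P t x y)
    (cP CP : ℝ) (hcP : 0 < cP) (hcPCP : cP ≤ CP)
    (hPbd : ∀ t : ℝ, 0 < t → ∀ x y : M,
        cP ≤ P t x y * (μ (ball x (t ^ (1/α) + dist x y))).toReal *
            (t ^ (1/α) + dist x y) ^ α / t ∧
        P t x y * (μ (ball x (t ^ (1/α) + dist x y))).toReal *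
            (t ^ (1/α) + dist x y) ^ α / t ≤ CP)
    (x₀ : M)
    (hunb : ∀ R : ℝ, ∃ y : M, R < dist x₀ y)
    (φ : ℝ → ℝ) (hφpos : ∀ t : ℝ, 0 < t → 0 < φ t)
    (hφanti : AntitoneOn φ (Set.Ioi (0:ℝ)))
    (hφ0 : Tendsto φ atTop (nhds 0)) :
    ∃ ε : ℝ, 0 < ε ∧ ε < 1 ∧
    ∃ m : ℕ → ℝ, (∀ k, 0 ≤ m k) ∧ (∑' k, m k) = ε ∧
    ∃ xs : ℕ → M, ∃ ts : ℕ → ℝ, (∀ k, 0 < ts k) ∧ Tendsto ts atTop atTop ∧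
    ∃ c₁ : ℝ, 0 < c₁ ∧ ∀ k : ℕ, 1 ≤ k →
      c₁ * k * φ (ts k) ≤
        |((1 - ε) * P (ts k) x₀ x₀ + ∑' j, m j * P (ts k) x₀ (xs j)) - P (ts k) x₀ x₀| *
          (μ (ball x₀ ((ts k) ^ (1/α)))).toReal := by
  classical
  have hCP : 0 < CP := lt_of_lt_of_le hcP hcPCP
  set ρ : ℝ := cP / (9 * CP) with hρdef
  have hρ0 : 0 < ρ := div_pos hcP (by linarith)
  have hρ19 : ρ ≤ 1/9 := by
    rw [hρdef, div_le_div_iff₀ (by linarith) (by norm_num)]; linarith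
  have hρ1 : ρ < 1 := lt_of_le_of_lt hρ19 (by norm_num)
  have h1ρ : 0 < 1 - ρ := by linarith
  have hcPeq : cP = ρ * (9 * CP) := by
    rw [hρdef]; field_simp
  set m : ℕ → ℝ := fun k => (1/2) * (1 - ρ) * ρ ^ k with hmdef
  have hm0 : ∀ k, 0 < m k := by
    intro k
    have := pow_pos hρ0 k
    simp only [hmdef]
    nlinarith
  have hmsum : Summable m := by
    simp only [hmdef]
    exact (summable_geometric_of_lt_one hρ0.le hρ1).mul_left _
  have hmtsum : (∑' k, m k) = 1/2 := by
    simp only [hmdef]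
    rw [tsum_mul_left, tsum_geometric_of_lt_one hρ0.le hρ1]
    field_simp
  have htail : ∀ k : ℕ, (∑' i : ℕ, m (i + (k+1))) = (1/2) * ρ ^ (k+1) := by
    intro k
    have h1 : (fun i : ℕ => m (i + (k+1))) = fun i : ℕ => ((1/2) * (1 - ρ) * ρ ^ (k+1)) * ρ ^ i := by
      funext i
      simp only [hmdef, pow_add]
      ring
    rw [h1, tsum_mul_left, tsum_geometric_of_lt_one hρ0.le hρ1]
    field_simp
  -- basic rpow facts
  have hxα : ∀ x : ℝ, 0 < x → (x ^ (1/α)) ^ α = x := by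
    intro x hx
    rw [← Real.rpow_mul hx.le, one_div, inv_mul_cancel₀ (ne_of_gt hα0), Real.rpow_one]
  have hspos : ∀ t : ℝ, 0 < t → 0 < t ^ (1/α) := fun t ht => Real.rpow_pos_of_pos ht _
  -- the normalized kernel bounds
  have hVposR : ∀ r : ℝ, 0 < r → 0 < (μ (ball x₀ r)).toReal := fun r hr =>
    ENNReal.toReal_pos (hVpos x₀ r hr).ne' (hVfin x₀ r hr).ne
  have hVmono : ∀ r R : ℝ, 0 < R → r ≤ R →
      (μ (ball x₀ r)).toReal ≤ (μ (ball x₀ R)).toReal := fun r R hR hrR =>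
    ENNReal.toReal_mono (hVfin x₀ R hR).ne (measure_mono (ball_subset_ball hrR))
  have hp_x₀ : ∀ t : ℝ, 0 < t → cP ≤ P t x₀ x₀ * (μ (ball x₀ (t ^ (1/α)))).toReal := by
    intro t ht
    have h := (hPbd t ht x₀ x₀).1
    simp only [dist_self, add_zero] at h
    rw [hxα t ht] at h
    rwa [mul_div_assoc, div_self ht.ne', mul_one] at h
  have hp_leCP : ∀ t : ℝ, 0 < t → ∀ y : M,
      P t x₀ y * (μ (ball x₀ (t ^ (1/α)))).toReal ≤ CP := by
    intro t ht y
    have hs : 0 < t ^ (1/α) := hspos t ht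
    have hd : (0:ℝ) ≤ dist x₀ y := dist_nonneg
    have hsd : 0 < t ^ (1/α) + dist x₀ y := by linarith
    have h := (hPbd t ht x₀ y).2
    rw [div_le_iff₀ ht] at h
    have hPp := hPpos t ht x₀ y
    have hV'pos : 0 < (μ (ball x₀ (t ^ (1/α) + dist x₀ y))).toReal := hVposR _ hsd
    have htle : t ≤ (t ^ (1/α) + dist x₀ y) ^ α := by
      calc t = (t ^ (1/α)) ^ α := (hxα t ht).symm
        _ ≤ _ := Real.rpow_le_rpow hs.le (by linarith) hα0.le
    have h5 : P t x₀ y * (μ (ball x₀ (t ^ (1/α) + dist x₀ y))).toReal * t ≤ CP * t := by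
      calc P t x₀ y * (μ (ball x₀ (t ^ (1/α) + dist x₀ y))).toReal * t
          ≤ P t x₀ y * (μ (ball x₀ (t ^ (1/α) + dist x₀ y))).toReal *
              (t ^ (1/α) + dist x₀ y) ^ α :=
            mul_le_mul_of_nonneg_left htle (by positivity)
        _ ≤ CP * t := h
    have h6 : P t x₀ y * (μ (ball x₀ (t ^ (1/α) + dist x₀ y))).toReal ≤ CP :=
      le_of_mul_le_mul_right h5 ht
    calc P t x₀ y * (μ (ball x₀ (t ^ (1/α)))).toReal
        ≤ P t x₀ y * (μ (ball x₀ (t ^ (1/α) + dist x₀ y))).toReal :=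
          mul_le_mul_of_nonneg_left (hVmono _ _ hsd (by linarith)) hPp.le
      _ ≤ CP := h6
  have hp_far : ∀ t : ℝ, 0 < t → ∀ γ : ℝ, 0 < γ → ∃ y : M,
      P t x₀ y * (μ (ball x₀ (t ^ (1/α)))).toReal ≤ γ := by
    intro t ht γ hγ
    obtain ⟨y, hy⟩ := hunb ((CP * t / γ) ^ (1/α))
    have hB : 0 < CP * t / γ := div_pos (mul_pos hCP ht) hγ
    have hd0 : 0 < dist x₀ y := lt_of_le_of_lt (Real.rpow_nonneg hB.le _) hy
    have hs : 0 < t ^ (1/α) := hspos t ht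
    have hsd : 0 < t ^ (1/α) + dist x₀ y := by linarith
    have h := (hPbd t ht x₀ y).2
    rw [div_le_iff₀ ht] at h
    have hPp := hPpos t ht x₀ y
    have h1 : CP * t / γ ≤ (dist x₀ y) ^ α := by
      calc CP * t / γ = ((CP * t / γ) ^ (1/α)) ^ α := (hxα _ hB).symm
        _ ≤ _ := Real.rpow_le_rpow (Real.rpow_nonneg hB.le _) hy.le hα0.le
    have h2 : (dist x₀ y) ^ α ≤ (t ^ (1/α) + dist x₀ y) ^ α :=
      Real.rpow_le_rpow hd0.le (by linarith) hα0.le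
    have h3 : CP * t ≤ γ * (t ^ (1/α) + dist x₀ y) ^ α := by
      have h4 : CP * t ≤ (dist x₀ y) ^ α * γ := (div_le_iff₀ hγ).mp h1
      nlinarith
    have h5 : P t x₀ y * (μ (ball x₀ (t ^ (1/α) + dist x₀ y))).toReal *
        (t ^ (1/α) + dist x₀ y) ^ α ≤ γ * (t ^ (1/α) + dist x₀ y) ^ α := le_trans h h3
    have h6 : P t x₀ y * (μ (ball x₀ (t ^ (1/α) + dist x₀ y))).toReal ≤ γ :=
      le_of_mul_le_mul_right h5 (Real.rpow_pos_of_pos hsd α)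
    refine ⟨y, le_trans ?_ h6⟩
    exact mul_le_mul_of_nonneg_left (hVmono _ _ hsd (by linarith)) hPp.le
  -- the recursive step
  have hstep : ∀ (xp : ℕ → M) (k : ℕ), ∃ t : ℝ, ∃ x : M,
      (k:ℝ) + 1 ≤ t ∧ (k:ℝ) * φ t ≤ cP * m k / 4 ∧
      3 * cP * m k / 8 ≤
        |((1/2) * (P t x₀ x₀ * (μ (ball x₀ (t ^ (1/α)))).toReal)
          - ∑ j ∈ Finset.range k, m j * (P t x₀ (xp j) * (μ (ball x₀ (t ^ (1/α)))).toReal))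
          - m k * (P t x₀ x * (μ (ball x₀ (t ^ (1/α)))).toReal)| := by
    intro xp k
    set A : ℝ → ℝ := fun u =>
      (1/2) * (P u x₀ x₀ * (μ (ball x₀ (u ^ (1/α)))).toReal)
        - ∑ j ∈ Finset.range k, m j * (P u x₀ (xp j) * (μ (ball x₀ (u ^ (1/α)))).toReal)
      with hAdef
    have hk1 : (0:ℝ) < (k:ℝ) + 1 := by positivity
    have hδ : 0 < cP * m k / 4 / ((k:ℝ) + 1) := by
      have := hm0 k
      positivity
    have hevφ : ∀ᶠ u in atTop, φ u < cP * m k / 4 / ((k:ℝ) + 1) :=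
      hφ0.eventually_lt_const hδ
    have hphi : ∀ u : ℝ, φ u < cP * m k / 4 / ((k:ℝ) + 1) → (k:ℝ) * φ u ≤ cP * m k / 4 := by
      intro u hu
      have e1 : (k:ℝ) * φ u ≤ (k:ℝ) * (cP * m k / 4 / ((k:ℝ) + 1)) :=
        mul_le_mul_of_nonneg_left hu.le (Nat.cast_nonneg k)
      have e2 : (k:ℝ) * (cP * m k / 4 / ((k:ℝ) + 1)) ≤ cP * m k / 4 := by
        rw [← mul_div_assoc, div_le_iff₀ hk1]
        linarith [mul_pos hcP (hm0 k)]
      linarith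
    by_cases hc : ∀ᶠ u in atTop, |A u| < cP * m k / 2
    · -- stale sum eventually close; put the new mass at x₀ itself
      obtain ⟨t, ⟨hAt, hφt⟩, ht1⟩ :=
        ((hc.and hevφ).and (eventually_ge_atTop ((k:ℝ) + 1))).exists
      have ht0 : 0 < t := lt_of_lt_of_le hk1 ht1
      refine ⟨t, x₀, ht1, hphi t hφt, ?_⟩
      show 3 * cP * m k / 8 ≤
        |A t - m k * (P t x₀ x₀ * (μ (ball x₀ (t ^ (1/α)))).toReal)|
      have h1 : m k * cP ≤ m k * (P t x₀ x₀ * (μ (ball x₀ (t ^ (1/α)))).toReal) :=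
        mul_le_mul_of_nonneg_left (hp_x₀ t ht0) (hm0 k).le
      have h2 : |m k * (P t x₀ x₀ * (μ (ball x₀ (t ^ (1/α)))).toReal)| - |A t| ≤
          |m k * (P t x₀ x₀ * (μ (ball x₀ (t ^ (1/α)))).toReal) - A t| :=
        abs_sub_abs_le_abs_sub _ _
      have h2' : |m k * (P t x₀ x₀ * (μ (ball x₀ (t ^ (1/α)))).toReal) - A t| =
          |A t - m k * (P t x₀ x₀ * (μ (ball x₀ (t ^ (1/α)))).toReal)| :=
        abs_sub_comm _ _
      have h3 : |m k * (P t x₀ x₀ * (μ (ball x₀ (t ^ (1/α)))).toReal)| =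
          m k * (P t x₀ x₀ * (μ (ball x₀ (t ^ (1/α)))).toReal) :=
        abs_of_nonneg (mul_nonneg (hm0 k).le
          (mul_nonneg (hPpos t ht0 x₀ x₀).le ENNReal.toReal_nonneg))
      have h4 : 0 < cP * m k := mul_pos hcP (hm0 k)
      linarith [h2, h2', h3, h1, hAt]
    · -- |A| is frequently large; push the new mass far away
      rw [Filter.not_eventually] at hc
      simp only [not_lt] at hc
      obtain ⟨t, hAt, hφt, ht1⟩ :=
        (hc.and_eventually (hevφ.and (eventually_ge_atTop ((k:ℝ) + 1)))).exists
      have ht0 : 0 < t := lt_of_lt_of_le hk1 ht1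
      obtain ⟨x, hx⟩ := hp_far t ht0 (cP/8) (by positivity)
      refine ⟨t, x, ht1, hphi t hφt, ?_⟩
      show 3 * cP * m k / 8 ≤
        |A t - m k * (P t x₀ x * (μ (ball x₀ (t ^ (1/α)))).toReal)|
      have h2 : m k * (P t x₀ x * (μ (ball x₀ (t ^ (1/α)))).toReal) ≤ m k * (cP/8) :=
        mul_le_mul_of_nonneg_left hx (hm0 k).le
      have h3 : |A t| - |m k * (P t x₀ x * (μ (ball x₀ (t ^ (1/α)))).toReal)| ≤
          |A t - m k * (P t x₀ x * (μ (ball x₀ (t ^ (1/α)))).toReal)| :=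
        abs_sub_abs_le_abs_sub _ _
      have h4 : |m k * (P t x₀ x * (μ (ball x₀ (t ^ (1/α)))).toReal)| =
          m k * (P t x₀ x * (μ (ball x₀ (t ^ (1/α)))).toReal) :=
        abs_of_nonneg (mul_nonneg (hm0 k).le
          (mul_nonneg (hPpos t ht0 x₀ x).le ENNReal.toReal_nonneg))
      have h5 : m k * (cP/8) = cP * m k / 8 := by ring
      linarith [h3, h4, h2, hAt]
  choose tF xF hF1 hF2 hF3 using hstep
  let hfun : ℕ → ℕ → M := fun n =>
    Nat.rec (motive := fun _ => ℕ → M) (fun _ => x₀)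
      (fun n prev => Function.update prev n (xF prev n)) n
  let xs : ℕ → M := fun k => xF (hfun k) k
  let ts : ℕ → ℝ := fun k => tF (hfun k) k
  have hagree : ∀ n j, j < n → hfun n j = xs j := by
    intro n
    induction n with
    | zero => intro j hj; exact absurd hj (Nat.not_lt_zero j)
    | succ n ih =>
      intro j hj
      have hsucc : hfun (n+1) = Function.update (hfun n) n (xF (hfun n) n) := rfl
      rw [hsucc]
      rcases Nat.lt_succ_iff_lt_or_eq.mp hj with h | h
      · rw [Function.update_of_ne (Nat.ne_of_lt h), ih j h]
      · subst h
        rw [Function.update_self]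
  have hts_ge : ∀ k : ℕ, (k:ℝ) + 1 ≤ ts k := fun k => hF1 (hfun k) k
  have hts_pos : ∀ k : ℕ, 0 < ts k := fun k => lt_of_lt_of_le (by positivity) (hts_ge k)
  have htends : Tendsto ts atTop atTop := by
    refine tendsto_atTop_mono hts_ge ?_
    exact tendsto_atTop_add_const_right atTop 1 tendsto_natCast_atTop_atTop
  refine ⟨1/2, by norm_num, by norm_num, m, fun k => (hm0 k).le, hmtsum, xs, ts, hts_pos,
    htends, 1, one_pos, ?_⟩
  intro k hk
  set t := ts k with htdef
  have ht0 : 0 < t := hts_pos k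
  set W : ℝ := (μ (ball x₀ (t ^ (1/α)))).toReal with hWdef
  have hW : 0 < W := by rw [hWdef]; exact hVposR _ (hspos t ht0)
  have hCPle : ∀ y : M, P t x₀ y * W ≤ CP := by
    intro y; rw [hWdef]; exact hp_leCP t ht0 y
  -- summability
  have hq : Summable (fun j => m j * (P t x₀ (xs j) * W)) := by
    refine Summable.of_nonneg_of_le
      (fun j => mul_nonneg (hm0 j).le (mul_nonneg (hPpos t ht0 x₀ (xs j)).le hW.le))
      (fun j => mul_le_mul_of_nonneg_left (hCPle (xs j)) (hm0 j).le)
      (hmsum.mul_right CP)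
  have hPsummable : Summable (fun j => m j * P t x₀ (xs j)) := by
    have hq' : Summable (fun j => (m j * P t x₀ (xs j)) * W) := by
      simpa only [mul_assoc] using hq
    exact (summable_mul_right_iff hW.ne').mp hq'
  -- the key lower bound from the construction
  have htt : t = tF (hfun k) k := htdef.trans rfl
  have hxx : xs k = xF (hfun k) k := rfl
  have hkey0 := hF3 (hfun k) k
  rw [← htt, ← hxx, ← hWdef] at hkey0
  have hsumeq : (∑ j ∈ Finset.range k, m j * (P t x₀ (hfun k j) * W)) =
      ∑ j ∈ Finset.range k, m j * (P t x₀ (xs j) * W) :=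
    Finset.sum_congr rfl (fun j hj => by rw [hagree k j (Finset.mem_range.mp hj)])
  rw [hsumeq] at hkey0
  -- tail bound
  have hqtail : Summable (fun i => m (i + (k+1)) * (P t x₀ (xs (i + (k+1))) * W)) :=
    (summable_nat_add_iff (k+1)).mpr hq
  have hTL0 : 0 ≤ ∑' i : ℕ, m (i + (k+1)) * (P t x₀ (xs (i + (k+1))) * W) :=
    tsum_nonneg (fun i => mul_nonneg (hm0 _).le
      (mul_nonneg (hPpos t ht0 x₀ _).le hW.le))
  have hTLle : (∑' i : ℕ, m (i + (k+1)) * (P t x₀ (xs (i + (k+1))) * W)) ≤ cP * m k / 8 := by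
    have hb : (∑' i : ℕ, m (i + (k+1)) * (P t x₀ (xs (i + (k+1))) * W)) ≤
        ∑' i : ℕ, m (i + (k+1)) * CP := by
      refine Summable.tsum_le_tsum (fun i => mul_le_mul_of_nonneg_left (hCPle _) (hm0 _).le)
        hqtail (((summable_nat_add_iff (k+1)).mpr hmsum).mul_right CP)
    have hb2 : (∑' i : ℕ, m (i + (k+1)) * CP) = ((1/2) * ρ ^ (k+1)) * CP := by
      rw [tsum_mul_right, htail k]
    have hρk : 0 < ρ ^ k := pow_pos hρ0 k
    have hb3 : ((1/2) * ρ ^ (k+1)) * CP ≤ cP * m k / 8 := by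
      simp only [hmdef, pow_succ]
      nlinarith [mul_pos (mul_pos hCP hρ0) hρk,
        mul_le_mul_of_nonneg_left hρ19 (mul_pos (mul_pos hCP hρ0) hρk).le]
    linarith [hb, hb2 ▸ hb, hb3]
  -- rewrite the goal
  have e0 : ((1 - 1/2) * P t x₀ x₀ + ∑' j, m j * P t x₀ (xs j)) - P t x₀ x₀
      = (∑' j, m j * P t x₀ (xs j)) - (1/2) * P t x₀ x₀ := by ring
  rw [e0, ← abs_of_nonneg hW.le, ← abs_mul]
  have e1 : ((∑' j, m j * P t x₀ (xs j)) - (1/2) * P t x₀ x₀) * W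
      = (∑' j, m j * (P t x₀ (xs j) * W)) - (1/2) * (P t x₀ x₀ * W) := by
    rw [sub_mul, ← tsum_mul_right]
    congr 1
    · exact tsum_congr fun j => mul_assoc _ _ _
    · ring
  rw [e1]
  have hsplit : (∑' j, m j * (P t x₀ (xs j) * W)) =
      (∑ j ∈ Finset.range (k+1), m j * (P t x₀ (xs j) * W)) +
        ∑' i : ℕ, m (i + (k+1)) * (P t x₀ (xs (i + (k+1))) * W) :=
    (Summable.sum_add_tsum_nat_add (k+1) hq).symm
  rw [hsplit, Finset.sum_range_succ]
  have e2 : ((∑ j ∈ Finset.range k, m j * (P t x₀ (xs j) * W)) +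
        m k * (P t x₀ (xs k) * W) +
        (∑' i : ℕ, m (i + (k+1)) * (P t x₀ (xs (i + (k+1))) * W)))
        - (1/2) * (P t x₀ x₀ * W)
      = (∑' i : ℕ, m (i + (k+1)) * (P t x₀ (xs (i + (k+1))) * W)) -
        (((1/2) * (P t x₀ x₀ * W) - ∑ j ∈ Finset.range k, m j * (P t x₀ (xs j) * W))
          - m k * (P t x₀ (xs k) * W)) := by ring
  rw [e2]
  have habs := abs_sub_abs_le_abs_sub
    (((1/2) * (P t x₀ x₀ * W) - ∑ j ∈ Finset.range k, m j * (P t x₀ (xs j) * W))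
      - m k * (P t x₀ (xs k) * W))
    (∑' i : ℕ, m (i + (k+1)) * (P t x₀ (xs (i + (k+1))) * W))
  have hcomm := abs_sub_comm
    ((((1/2) * (P t x₀ x₀ * W) - ∑ j ∈ Finset.range k, m j * (P t x₀ (xs j) * W))
      - m k * (P t x₀ (xs k) * W)))
    (∑' i : ℕ, m (i + (k+1)) * (P t x₀ (xs (i + (k+1))) * W))
  have hTLabs : |(∑' i : ℕ, m (i + (k+1)) * (P t x₀ (xs (i + (k+1))) * W))| =
      ∑' i : ℕ, m (i + (k+1)) * (P t x₀ (xs (i + (k+1))) * W) := abs_of_nonneg hTL0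
  have hφk : (k:ℝ) * φ t ≤ cP * m k / 4 := by
    rw [htdef]; exact hF2 (hfun k) k
  linarith [hkey0, habs, hcomm, hTLabs, hTLle, hφk]
end
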